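/- arXiv:1904.02799 — 7 statements merged into one kernel-verified Lean document; each statement's English description precedes it below -/
import Mathlib

section
/- If D is a blocking odd cycle (a digraph whose underlying graph is an odd cycle x_1 x_2 ... x_{2k+1} x_1 with k ≥ 1, in which both x_1 and x_2 are each either a source or a sink), then D does not satisfy the BE-property; that is, there exists a maximum stable set S of D for which no S_BE-path partition of D exists. -/
open Relation

variable {V : Type*}

/-- `u` and `v` are adjacent in the digraph with arc relation `A`. -/
def DAdj (A : V → V → Prop) (u v : V) : Prop := A u v ∨ A v u

/-- `v` is a source: no arc enters `v`. -/
def IsSource (A : V → V → Prop) (v : V) : Prop := ∀ u, ¬ A u v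

/-- `v` is a sink: no arc leaves `v`. -/
def IsSink (A : V → V → Prop) (v : V) : Prop := ∀ u, ¬ A v u

/-- A stable (independent) set of the digraph. -/
def IsStable (A : V → V → Prop) (S : Set V) : Prop :=
  ∀ u ∈ S, ∀ v ∈ S, u ≠ v → ¬ DAdj A u v

/-- The stability number. -/
noncomputable def alphaNum (A : V → V → Prop) : ℕ :=
  sSup {n | ∃ S : Set V, IsStable A S ∧ S.ncard = n}

/-- A maximum stable set. -/
def IsMaxStable (A : V → V → Prop) (S : Set V) : Prop :=
  IsStable A S ∧ ∀ T : Set V, IsStable A T → T.ncard ≤ S.ncard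

/-- A (nonempty) directed path, given as its list of vertices. -/
def IsDiPath (A : V → V → Prop) (l : List V) : Prop :=
  l ≠ [] ∧ l.Nodup ∧ l.Chain' A

/-- A path partition of the digraph: every vertex lies on exactly one of the paths. -/
def IsPathPartition (A : V → V → Prop) (P : Set (List V)) : Prop :=
  (∀ l ∈ P, IsDiPath A l) ∧ ∀ v : V, ∃! l, l ∈ P ∧ v ∈ l

/-- An `S`-path partition: each path contains exactly one vertex of `S`. -/
def IsSPartition (A : V → V → Prop) (S : Set V) (P : Set (List V)) : Prop :=
  IsPathPartition A P ∧ ∀ l ∈ P, ∃! s, s ∈ l ∧ s ∈ S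

/-- An `S`-BE-path partition: each path contains exactly one vertex of `S`,
which is moreover an endpoint of the path. -/
def IsBEPartition (A : V → V → Prop) (S : Set V) (P : Set (List V)) : Prop :=
  IsSPartition A S P ∧
    ∀ l ∈ P, ∀ s ∈ l, s ∈ S → l.head? = some s ∨ l.getLast? = some s

/-- The α-property: every maximum stable set admits an `S`-path partition. -/
def AlphaProperty (A : V → V → Prop) : Prop :=
  ∀ S : Set V, IsMaxStable A S → ∃ P, IsSPartition A S P

/-- The BE-property: every maximum stable set admits an `S`-BE-path partition. -/
def BEProperty (A : V → V → Prop) : Prop :=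
  ∀ S : Set V, IsMaxStable A S → ∃ P, IsBEPartition A S P

/-- α-diperfect: every induced subdigraph satisfies the α-property. -/
def AlphaDiperfect (A : V → V → Prop) : Prop :=
  ∀ W : Set V, AlphaProperty (fun a b : W => A a.1 b.1)

/-- BE-diperfect: every induced subdigraph satisfies the BE-property. -/
def BEDiperfect (A : V → V → Prop) : Prop :=
  ∀ W : Set V, BEProperty (fun a b : W => A a.1 b.1)

/-- Mutual reachability. -/
def MutReach (A : V → V → Prop) (u v : V) : Prop :=
  ReflTransGen A u v ∧ ReflTransGen A v u

/-- Semicomplete digraph: any two distinct vertices are adjacent. -/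
def Semicomplete (A : V → V → Prop) : Prop :=
  ∀ u v : V, u ≠ v → DAdj A u v

/-- Strongly connected digraph. -/
def Strong (A : V → V → Prop) : Prop :=
  ∀ u v : V, ReflTransGen A u v

/-- The digraph has an induced transitive triangle. -/
def HasInducedTransitiveTriangle (A : V → V → Prop) : Prop :=
  ∃ a b c : V, a ≠ b ∧ a ≠ c ∧ b ≠ c ∧
    A a b ∧ A a c ∧ A c b ∧ ¬ A b a ∧ ¬ A c a ∧ ¬ A b c

/-- The digraph is a blocking odd cycle: its underlying graph is an odd cycle
`x_1 x_2 ⋯ x_{2k+1} x_1` (with `k ≥ 1`; here `x i` is `x_{i+1}`), and both `x_1`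
and `x_2` are each a source or a sink. -/
def IsBlockingOddCycle (A : V → V → Prop) : Prop :=
  ∃ (k : ℕ) (x : ZMod (2 * k + 1) → V), 1 ≤ k ∧ Function.Bijective x ∧
    (∀ i j, DAdj A (x i) (x j) ↔ (j = i + 1 ∨ i = j + 1)) ∧
    (IsSource A (x 0) ∨ IsSink A (x 0)) ∧
    (IsSource A (x 1) ∨ IsSink A (x 1))

/-- The digraph is an anti-directed odd cycle: its underlying graph is an odd cycle
`x_1 ⋯ x_{2k+1} x_1` with `k ≥ 2` (here `x m` is `x_{m+1}`), and each of
`x_1, x_2, x_3, x_4, x_6, x_8, …, x_{2k}` is a source or a sink. -/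
def IsAntiDirectedOddCycle (A : V → V → Prop) : Prop :=
  ∃ (k : ℕ) (x : ZMod (2 * k + 1) → V), 2 ≤ k ∧ Function.Bijective x ∧
    (∀ i j, DAdj A (x i) (x j) ↔ (j = i + 1 ∨ i = j + 1)) ∧
    ∀ m : ℕ, m ≤ 2 * k →
      (m ≤ 3 ∨ (5 ≤ m ∧ m ≤ 2 * k - 1 ∧ Odd m)) →
      (IsSource A (x (m : ZMod (2 * k + 1))) ∨ IsSink A (x (m : ZMod (2 * k + 1))))

/-- `v` is a universal vertex. -/
def IsUniversal (A : V → V → Prop) (v : V) : Prop := ∀ u, u ≠ v → DAdj A u v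

/-- The underlying simple graph of a digraph. -/
def underlyingGraph (A : V → V → Prop) : SimpleGraph V where
  Adj u v := u ≠ v ∧ DAdj A u v
  symm := ⟨fun _ _ h => ⟨h.1.symm, h.2.symm⟩⟩
  loopless := ⟨fun _ h => h.1 rfl⟩

/-- The underlying graph of the digraph is a cycle. -/
def UnderlyingIsCycle (A : V → V → Prop) : Prop :=
  ∃ (n : ℕ) (x : ZMod n → V), 3 ≤ n ∧ Function.Bijective x ∧
    ∀ i j, DAdj A (x i) (x j) ↔ (j = i + 1 ∨ i = j + 1)

/-- A perfect graph: every induced subgraph has chromatic number equal to its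
clique number. -/
def GraphPerfect (G : SimpleGraph V) : Prop :=
  ∀ W : Set V, (G.induce W).chromaticNumber = ((G.induce W).cliqueNum : ℕ∞)

/-- A Hamilton directed path whose endpoints are `{s, t}` (in some order). -/
def HamiltonPathBetween (A : V → V → Prop) (s t : V) : Prop :=
  ∃ l : List V, IsDiPath A l ∧ (∀ v : V, v ∈ l) ∧
    ((l.head? = some s ∧ l.getLast? = some t) ∨
      (l.head? = some t ∧ l.getLast? = some s))

/-- A Hamilton directed path starting at `s` and ending at `t`. -/
def HamiltonPathFromTo (A : V → V → Prop) (s t : V) : Prop :=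
  ∃ l : List V, IsDiPath A l ∧ (∀ v : V, v ∈ l) ∧
    l.head? = some s ∧ l.getLast? = some t

/-- The exceptional strong semicomplete digraph on four vertices
(`a,b,c,d = 0,1,2,3`): the 4-cycle `a→d→c→b→a` together with digons `a↔c`, `b↔d`. -/
def BadFour : Fin 4 → Fin 4 → Prop := fun u v =>
  (u, v) ∈ ({(0,3), (3,2), (2,1), (1,0), (0,2), (2,0), (1,3), (3,1)} :
    Set (Fin 4 × Fin 4))

/-- A locally in-semicomplete digraph: any two in-neighbours of a vertex are adjacent. -/
def LocallyInSemicomplete (A : V → V → Prop) : Prop :=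
  ∀ v u w : V, A u v → A w v → u ≠ w → DAdj A u w

/-- A strong component: a maximal set of pairwise mutually reachable vertices. -/
def IsStrongComponent (A : V → V → Prop) (X : Set V) : Prop :=
  X.Nonempty ∧ (∀ u ∈ X, ∀ v ∈ X, MutReach A u v) ∧
    ∀ u v, v ∈ X → MutReach A u v → u ∈ X

/-- `C` is the vertex set of an induced cycle of `G`. -/
def InducedCycleSet (G : SimpleGraph V) (C : Set V) : Prop :=
  ∃ (n : ℕ) (x : ZMod n → V), 3 ≤ n ∧ Function.Injective x ∧ Set.range x = C ∧
    ∀ i j, G.Adj (x i) (x j) ↔ (j = i + 1 ∨ i = j + 1)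

/-- `G` contains a subdivision of `K₄`: four branch vertices joined by
pairwise internally disjoint paths. -/
def HasK4Subdivision (G : SimpleGraph V) : Prop :=
  ∃ (b : Fin 4 → V) (P : ∀ i j : Fin 4, G.Walk (b i) (b j)),
    Function.Injective b ∧
    (∀ i j, i ≠ j → (P i j).IsPath) ∧
    (∀ i j m, i ≠ j → b m ∈ (P i j).support → m = i ∨ m = j) ∧
    (∀ i j k l, i ≠ j → k ≠ l → ({i, j} : Finset (Fin 4)) ≠ {k, l} →
      ∀ v, v ∈ (P i j).support → v ∈ (P k l).support →
        (v = b i ∨ v = b j) ∧ (v = b k ∨ v = b l))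

/-- 2-connected: connected, at least 3 vertices, and no cut vertex. -/
def TwoConnected (G : SimpleGraph V) : Prop :=
  G.Connected ∧ 3 ≤ Nat.card V ∧
    ∀ v : V, (G.induce {u | u ≠ v}).Preconnected

/-!
Label the cycle by `ZMod (2k+1)` and let `S` be the set of vertices with nonzero even label;
it is stable of size `k`, hence maximum. In an `S`-BE-path partition an interior vertex `b`
of a path lies outside `S` and has an in- and an out-neighbour, so `b` is neither of the
sources or sinks `x 0`, `x 1`: its label is odd and at least `3`, and both of its neighbours lie in `S`, which is
impossible on a path with a single vertex of `S`. So the `k` paths have at most two vertices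
each and cannot cover all `2k+1` vertices.
-/

namespace IsSPartition

variable {A : V → V → Prop} {S : Set V} {P : Set (List V)}

/-- Each vertex is determined by the `S`-vertex of its path and its position on that path. -/
theorem card_le_mul [Finite V] (hP : IsSPartition A S P) {m : ℕ}
    (hm : ∀ l ∈ P, l.length ≤ m) : Nat.card V ≤ m * S.ncard := by
  classical
  obtain ⟨⟨-, hcover⟩, hone⟩ := hP
  choose path hpathP hmem_path using fun v => (hcover v).exists
  choose sv hsv_path hsv_S using fun v => (hone _ (hpathP v)).exists
  have hpath_eq {v w : V} (h : sv v = sv w) : path v = path w :=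
    (hcover (sv v)).unique ⟨hpathP v, hsv_path v⟩ ⟨hpathP w, h ▸ hsv_path w⟩
  let f : V → S × Fin m := fun v =>
    (⟨sv v, hsv_S v⟩, ⟨(path v).idxOf v,
      (List.idxOf_lt_length_iff.2 (hmem_path v)).trans_le (hm _ (hpathP v))⟩)
  have hf : Function.Injective f := by
    intro v w hvw
    simp only [f, Prod.mk.injEq, Subtype.mk.injEq, Fin.mk.injEq] at hvw
    obtain ⟨hs, hidx⟩ := hvw
    rw [hpath_eq hs] at hidx
    exact ((List.idxOf_inj (hmem_path w)).1 hidx.symm).symm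
  simpa [Nat.card_prod, Nat.card_coe_set_eq, mul_comm] using Nat.card_le_card_of_injective f hf

end IsSPartition

namespace IsBEPartition

variable {A : V → V → Prop} {S : Set V} {P : Set (List V)}

theorem length_le_two (hP : IsBEPartition A S P)
    (hmid : ∀ a b c, A a b → A b c → a ≠ c → b ∉ S → a ∈ S ∧ c ∈ S) :
    ∀ l ∈ P, l.length ≤ 2 := by
  obtain ⟨⟨⟨hpaths, -⟩, hone⟩, hend⟩ := hP
  intro l hl
  match l, hl with
  | [], _ | [_], _ | [_, _], _ => simp
  | a :: b :: c :: t, hl =>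
    obtain ⟨-, hnd, hchain⟩ := hpaths _ hl
    simp only [List.nodup_cons, List.mem_cons, not_or] at hnd
    obtain ⟨⟨hab, hac, -⟩, ⟨hbc, hbt⟩, -⟩ := hnd
    obtain ⟨hAab, hchain⟩ := List.isChain_cons_cons.1 hchain
    obtain ⟨hAbc, -⟩ := List.isChain_cons_cons.1 hchain
    have hb : b ∉ S := by
      intro hb
      rcases hend _ hl b (by simp) hb with h | h
      · exact hab (Option.some.inj h)
      · rw [List.getLast?_cons_cons, List.getLast?_cons_cons] at h
        rcases List.mem_cons.1 (List.mem_of_getLast? h) with h | h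
        exacts [hbc h, hbt h]
    obtain ⟨haS, hcS⟩ := hmid a b c hAab hAbc hac hb
    exact absurd ((hone _ hl).unique ⟨by simp, haS⟩ ⟨by simp, hcS⟩) hac

end IsBEPartition

namespace ZMod

def evenNonzero (n : ℕ) : Set (ZMod n) := {i | i ≠ 0 ∧ Even i.val}

variable {n : ℕ} [NeZero n]

theorem two_mul_ncard_le {T : Set (ZMod n)} (hT : ∀ i ∈ T, i + 1 ∉ T) :
    2 * T.ncard ≤ n := by
  have hdisj : Disjoint T ((· + 1) '' T) := by
    rw [Set.disjoint_left]
    rintro _ hi ⟨j, hj, rfl⟩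
    exact hT j hj hi
  calc 2 * T.ncard = (T ∪ (· + 1) '' T).ncard := by
        rw [Set.ncard_union_eq hdisj, Set.ncard_image_of_injective _ (add_left_injective 1)]
        ring
    _ ≤ Nat.card (ZMod n) := Set.ncard_le_card _
    _ = n := Nat.card_zmod n

theorem val_add_one (i : ZMod n) : (i + 1).val = (i.val + 1) % n := by
  rw [val_add, val_one_eq_one_mod, Nat.add_mod_mod]

theorem val_add_one_of_ne_zero {i : ZMod n} (h : i + 1 ≠ 0) : (i + 1).val = i.val + 1 := by
  rw [val_add_one, Nat.mod_eq_of_lt]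
  refine (show i.val + 1 ≤ n from i.val_lt).lt_of_ne fun heq => h ?_
  rw [← val_eq_zero, val_add_one, heq, Nat.mod_self]

theorem add_one_notMem_evenNonzero {i : ZMod n} (hi : i ∈ evenNonzero n) :
    i + 1 ∉ evenNonzero n := by
  rintro ⟨hne, heven⟩
  rw [val_add_one_of_ne_zero hne] at heven
  exact Nat.not_even_iff_odd.2 hi.2.add_one heven

theorem sub_one_mem_evenNonzero {j : ZMod n} (h0 : j ≠ 0) (h1 : j ≠ 1)
    (hj : j ∉ evenNonzero n) : j - 1 ∈ evenNonzero n := by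
  have hodd : Odd j.val := Nat.not_even_iff_odd.1 fun h => hj ⟨h0, h⟩
  have hval := val_add_one_of_ne_zero (i := j - 1) (by rwa [sub_add_cancel])
  rw [sub_add_cancel] at hval
  rw [hval, Nat.odd_add_one, Nat.not_odd_iff_even] at hodd
  exact ⟨sub_ne_zero.2 h1, hodd⟩

theorem add_one_mem_evenNonzero (hn : Odd n) {j : ZMod n} (h0 : j ≠ 0)
    (hj : j ∉ evenNonzero n) : j + 1 ∈ evenNonzero n := by
  have hodd : Odd j.val := Nat.not_even_iff_odd.1 fun h => hj ⟨h0, h⟩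
  have hne : j + 1 ≠ 0 := by
    intro h
    have hval : (j.val + 1) % n = 0 := by rw [← val_add_one, h, val_zero]
    have hlt : j.val < n := j.val_lt
    have heq : j.val + 1 = n := by
      by_contra hne
      rw [Nat.mod_eq_of_lt (by omega)] at hval
      omega
    obtain ⟨r, hr⟩ := hodd
    obtain ⟨s, hs⟩ := hn
    omega
  exact ⟨hne, by rw [val_add_one_of_ne_zero hne]; exact hodd.add_one⟩

theorem le_ncard_evenNonzero (k : ℕ) : k ≤ (evenNonzero (2 * k + 1)).ncard := by
  let f : ℕ → ZMod (2 * k + 1) := fun m => ((2 * m : ℕ) : ZMod (2 * k + 1))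
  have hval {m : ℕ} (hm : m ∈ Set.Icc 1 k) : (f m).val = 2 * m :=
    val_natCast_of_lt (by grind)
  have hinj : Set.InjOn f (Set.Icc 1 k) := fun a ha b hb hab => by
    have := congrArg val hab
    rw [hval ha, hval hb] at this
    omega
  have hsub : f '' Set.Icc 1 k ⊆ evenNonzero (2 * k + 1) := by
    rintro _ ⟨m, hm, rfl⟩
    refine ⟨fun h => ?_, by rw [hval hm]; exact even_two_mul m⟩
    have := hval hm
    rw [h, val_zero] at this
    grind
  calc k = (Set.Icc 1 k).ncard := by simp
    _ = (f '' Set.Icc 1 k).ncard := hinj.ncard_image.symm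
    _ ≤ _ := Set.ncard_le_ncard hsub

end ZMod

section CycleLabelling

variable {A : V → V → Prop} {n : ℕ} {x : ZMod n → V}

theorem two_mul_ncard_le_of_isStable (hn : 1 < n) (hx : Function.Bijective x)
    (hadj : ∀ i, DAdj A (x i) (x (i + 1))) {T : Set V} (hT : IsStable A T) :
    2 * T.ncard ≤ n := by
  have : NeZero n := ⟨by omega⟩
  have : Fact (1 < n) := ⟨hn⟩
  rw [← Set.image_preimage_eq T hx.surjective, Set.ncard_image_of_injective _ hx.injective]
  exact ZMod.two_mul_ncard_le fun i hi hi1 =>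
    hT _ hi _ hi1 (hx.injective.ne (by simp)) (hadj i)

theorem isStable_image_evenNonzero [NeZero n]
    (hadj : ∀ i j, DAdj A (x i) (x j) → j = i + 1 ∨ i = j + 1) :
    IsStable A (x '' ZMod.evenNonzero n) := by
  rintro _ ⟨i, hi, rfl⟩ _ ⟨j, hj, rfl⟩ - hij
  rcases hadj i j hij with rfl | rfl
  exacts [ZMod.add_one_notMem_evenNonzero hi hj, ZMod.add_one_notMem_evenNonzero hj hi]

theorem mem_image_evenNonzero_of_arcs (hn : Odd n) (hx : Function.Surjective x)
    (hadj : ∀ i j, DAdj A (x i) (x j) → j = i + 1 ∨ i = j + 1)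
    (h0 : IsSource A (x 0) ∨ IsSink A (x 0)) (h1 : IsSource A (x 1) ∨ IsSink A (x 1))
    {a b c : V} (hab : A a b) (hbc : A b c) (hb : b ∉ x '' ZMod.evenNonzero n) :
    a ∈ x '' ZMod.evenNonzero n ∧ c ∈ x '' ZMod.evenNonzero n := by
  have : NeZero n := ⟨hn.pos.ne'⟩
  have hmid : ∀ v, IsSource A v ∨ IsSink A v → b ≠ v := by
    rintro v (hv | hv) rfl
    exacts [hv a hab, hv c hbc]
  obtain ⟨j, rfl⟩ := hx b
  have hj0 : j ≠ 0 := by rintro rfl; exact hmid _ h0 rfl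
  have hj1 : j ≠ 1 := by rintro rfl; exact hmid _ h1 rfl
  have hjE : j ∉ ZMod.evenNonzero n := fun h => hb ⟨j, h, rfl⟩
  have hnbr : ∀ v, DAdj A (x j) v → v ∈ x '' ZMod.evenNonzero n := by
    intro v hv
    obtain ⟨i, rfl⟩ := hx v
    rcases hadj j i hv with rfl | rfl
    · exact ⟨_, ZMod.add_one_mem_evenNonzero hn hj0 hjE, rfl⟩
    · exact ⟨i, by simpa using ZMod.sub_one_mem_evenNonzero hj0 hj1 hjE, rfl⟩
  exact ⟨hnbr a (Or.inr hab), hnbr c (Or.inl hbc)⟩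

end CycleLabelling

/-- If `D` is a blocking odd cycle, then `D` does not satisfy the BE-property:
there is a maximum stable set `S` with no `S`-BE-path partition. -/
theorem blocking_odd_cycle_not_BEProperty {V : Type*} [Finite V] (A : V → V → Prop)
    (h : IsBlockingOddCycle A) :
    ∃ S : Set V, IsMaxStable A S ∧ ¬ ∃ P : Set (List V), IsBEPartition A S P := by
  obtain ⟨k, x, hk, hx, hadj, h0, h1⟩ := h
  have hstable_le : ∀ T, IsStable A T → 2 * T.ncard ≤ 2 * k + 1 :=
    fun T => two_mul_ncard_le_of_isStable (by omega) hx fun i => (hadj i _).2 (Or.inl rfl)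
  set S := x '' ZMod.evenNonzero (2 * k + 1)
  have hS : IsStable A S := isStable_image_evenNonzero fun i j => (hadj i j).1
  have hk_le : k ≤ S.ncard := by
    rw [Set.ncard_image_of_injective _ hx.injective]
    exact ZMod.le_ncard_evenNonzero k
  refine ⟨S, ⟨hS, fun T hT => by have := hstable_le T hT; omega⟩, ?_⟩
  rintro ⟨P, hP⟩
  have hlen := hP.length_le_two fun a b c hab hbc _ hb =>
    mem_image_evenNonzero_of_arcs (odd_two_mul_add_one k) hx.surjective
      (fun i j => (hadj i j).1) h0 h1 hab hbc hb
  have hcard : 2 * k + 1 ≤ 2 * S.ncard := by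
    simpa [← Nat.card_eq_of_bijective x hx] using hP.1.card_le_mul hlen
  have := hstable_le S hS
  omega
end

section
/- Let D be a semicomplete digraph with no induced transitive triangle. If D is not strong, then D has exactly two strong components X1 and X2, with X1 minimal (no arcs enter X1), both X1 and X2 are complete digraphs (every pair of vertices in each is joined by arcs in both directions), every vertex of X1 dominates every vertex of X2, and for every s ∈ V(X1) and t ∈ V(X2) there exists a Hamilton directed path of D starting at s and ending at t. -/
open Relation

variable {V : Type*}

/-!
Pick `u` that does not reach every vertex and let `S` be the set of vertices reachable
from `u`. No arc leaves `S`, so by semicompleteness every vertex outside `S` strictly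
dominates every vertex of `S`. A one-way arc inside `S` (resp. `Sᶜ`) would then span a
transitive triangle with a vertex of `Sᶜ` (resp. `S`), so both parts are complete digraphs,
and any listing of `Sᶜ` starting at `s` followed by any listing of `S` ending at `t` is a
Hamilton path.
-/

section Semicomplete

variable {V : Type*} {A : V → V → Prop}

theorem ne_of_arc_of_not_arc {a b : V} (hab : A a b) (hba : ¬ A b a) : a ≠ b := by
  rintro rfl
  exact hba hab

theorem forall_arc_of_strictly_dominated (hsemi : Semicomplete A)
    (hTT : ¬ HasInducedTransitiveTriangle A) {X : Set V} {w : V}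
    (hw : ∀ x ∈ X, A w x ∧ ¬ A x w) {x y : V} (hx : x ∈ X) (hy : y ∈ X) (hxy : x ≠ y) :
    A x y := by
  by_contra hnxy
  have hyx : A y x := (hsemi x y hxy).resolve_left hnxy
  exact hTT ⟨w, x, y, ne_of_arc_of_not_arc (hw x hx).1 (hw x hx).2,
    ne_of_arc_of_not_arc (hw y hy).1 (hw y hy).2, hxy,
    (hw x hx).1, (hw y hy).1, hyx, (hw x hx).2, (hw y hy).2, hnxy⟩

theorem forall_arc_of_strictly_dominating (hsemi : Semicomplete A)
    (hTT : ¬ HasInducedTransitiveTriangle A) {X : Set V} {w : V}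
    (hw : ∀ x ∈ X, A x w ∧ ¬ A w x) {x y : V} (hx : x ∈ X) (hy : y ∈ X) (hxy : x ≠ y) :
    A x y := by
  by_contra hnxy
  have hyx : A y x := (hsemi x y hxy).resolve_left hnxy
  exact hTT ⟨y, w, x, ne_of_arc_of_not_arc (hw y hy).1 (hw y hy).2, hxy.symm,
    (ne_of_arc_of_not_arc (hw x hx).1 (hw x hx).2).symm,
    (hw y hy).1, hyx, (hw x hx).1, (hw y hy).2, hnxy, (hw x hx).2⟩

theorem forall_arc_of_outClosed (hsemi : Semicomplete A)
    (hTT : ¬ HasInducedTransitiveTriangle A) {S : Set V}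
    (hS : ∀ a b, a ∈ S → A a b → b ∈ S) {u v : V} (hu : u ∈ S) (hv : v ∉ S) :
    ∀ x y, x ≠ y → x ∉ S ∨ y ∈ S → A x y := by
  have hacross : ∀ x ∉ S, ∀ y ∈ S, A x y ∧ ¬ A y x := fun x hx y hy =>
    have hback : ¬ A y x := fun hyx => hx (hS y x hy hyx)
    ⟨(hsemi x y fun h => hx (h ▸ hy)).resolve_right hback, hback⟩
  intro x y hxy hxy'
  by_cases hx : x ∈ S <;> by_cases hy : y ∈ S
  · exact forall_arc_of_strictly_dominated hsemi hTT (hacross v hv) hx hy hxy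
  · exact absurd (hxy'.resolve_left (not_not.2 hx)) hy
  · exact (hacross x hx y hy).1
  · exact forall_arc_of_strictly_dominating hsemi hTT (X := Sᶜ)
      (fun z hz => hacross z hz u hu) hx hy hxy

theorem mutReach_of_forall_arc {X : Set V} (hX : ∀ x ∈ X, ∀ y ∈ X, x ≠ y → A x y) :
    ∀ x ∈ X, ∀ y ∈ X, MutReach A x y := by
  intro x hx y hy
  rcases eq_or_ne x y with rfl | hxy
  · exact ⟨.refl, .refl⟩
  · exact ⟨.single (hX x hx y hy hxy), .single (hX y hy x hx hxy.symm)⟩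

end Semicomplete

section HamiltonPath

variable {V : Type*} [Finite V]

theorem exists_nodup_list_head?_eq {X : Set V} {s : V} (hs : s ∈ X) :
    ∃ l : List V, l.Nodup ∧ (∀ x, x ∈ l ↔ x ∈ X) ∧ l.head? = some s := by
  classical
  refine ⟨s :: (X \ {s}).toFinite.toFinset.toList, ?_, fun x => ?_, rfl⟩
  · exact List.nodup_cons.2 ⟨by simp, Finset.nodup_toList _⟩
  · by_cases hx : x = s <;> simp [hx, hs]

theorem hamiltonPathFromTo_of_forall_arc {A : V → V → Prop} {S : Set V}
    (harc : ∀ x y, x ≠ y → x ∉ S ∨ y ∈ S → A x y) {s t : V} (hs : s ∉ S) (ht : t ∈ S) :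
    HamiltonPathFromTo A s t := by
  obtain ⟨l₁, hnd₁, hmem₁, hhead₁⟩ := exists_nodup_list_head?_eq (X := Sᶜ) hs
  obtain ⟨l₂, hnd₂, hmem₂, hhead₂⟩ := exists_nodup_list_head?_eq ht
  have hne₁ : l₁ ≠ [] := by rintro rfl; simp at hhead₁
  have hpw : (l₁ ++ l₂.reverse).Pairwise (fun x y => x ≠ y ∧ (x ∉ S ∨ y ∈ S)) := by
    refine List.pairwise_append.2 ⟨?_, ?_, ?_⟩
    · exact hnd₁.imp_of_mem fun hx _ hxy => ⟨hxy, .inl ((hmem₁ _).1 hx)⟩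
    · exact (List.nodup_reverse.2 hnd₂).imp_of_mem fun _ hy hxy =>
        ⟨hxy, .inr ((hmem₂ _).1 (List.mem_reverse.1 hy))⟩
    · intro x hx y hy
      have hx' : x ∉ S := (hmem₁ x).1 hx
      have hy' : y ∈ S := (hmem₂ y).1 (List.mem_reverse.1 hy)
      exact ⟨fun h => hx' (h ▸ hy'), .inl hx'⟩
  refine ⟨l₁ ++ l₂.reverse, ⟨by simp [hne₁], hpw.imp And.left,
    (hpw.imp fun h => harc _ _ h.1 h.2).isChain⟩, fun x => ?_, ?_, ?_⟩
  · by_cases hx : x ∈ S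
    · exact List.mem_append_right _ (List.mem_reverse.2 ((hmem₂ x).2 hx))
    · exact List.mem_append_left _ ((hmem₁ x).2 hx)
  · simp [List.head?_append, hhead₁]
  · simp [List.getLast?_append, List.getLast?_reverse, hhead₂]

end HamiltonPath

theorem nonstrong_semicomplete_structure_general {V : Type*} [Finite V] (A : V → V → Prop)
    (hsemi : Semicomplete A)
    (hTT : ¬ HasInducedTransitiveTriangle A) (hnstrong : ¬ Strong A) :
    ∃ X1 X2 : Set V, X1.Nonempty ∧ X2.Nonempty ∧ Disjoint X1 X2 ∧
      X1 ∪ X2 = Set.univ ∧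
      (∀ u ∈ X1, ∀ v ∈ X1, MutReach A u v) ∧
      (∀ u ∈ X2, ∀ v ∈ X2, MutReach A u v) ∧
      (∀ u ∈ X1, ∀ v ∈ X2, ¬ MutReach A u v) ∧
      (∀ u ∈ X2, ∀ v ∈ X1, ¬ A u v) ∧
      (∀ u ∈ X1, ∀ v ∈ X1, u ≠ v → A u v ∧ A v u) ∧
      (∀ u ∈ X2, ∀ v ∈ X2, u ≠ v → A u v ∧ A v u) ∧
      (∀ s ∈ X1, ∀ t ∈ X2, A s t ∧ ¬ A t s) ∧
      (∀ s ∈ X1, ∀ t ∈ X2, HamiltonPathFromTo A s t) := by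
  obtain ⟨u, v, huv⟩ : ∃ u v, ¬ ReflTransGen A u v := by simpa [Strong] using hnstrong
  set S : Set V := {w | ReflTransGen A u w}
  have hclosed : ∀ a b, a ∈ S → A a b → b ∈ S := fun _ _ ha hab => ha.tail hab
  have hback : ∀ a ∈ S, ∀ b ∈ Sᶜ, ¬ A a b := fun a ha b hb hab => hb (hclosed a b ha hab)
  have harc := forall_arc_of_outClosed hsemi hTT hclosed .refl huv
  have hcompl : ∀ x ∈ Sᶜ, ∀ y ∈ Sᶜ, x ≠ y → A x y := fun x hx y _ hxy =>
    harc x y hxy (.inl hx)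
  have hS : ∀ x ∈ S, ∀ y ∈ S, x ≠ y → A x y := fun x _ y hy hxy =>
    harc x y hxy (.inr hy)
  refine ⟨Sᶜ, S, ⟨v, huv⟩, ⟨u, .refl⟩, disjoint_compl_left, Set.compl_union_self S,
    mutReach_of_forall_arc hcompl, mutReach_of_forall_arc hS,
    fun a ha b hb h => ha (hb.trans h.2), hback,
    fun a ha b hb hab => ⟨hcompl a ha b hb hab, hcompl b hb a ha hab.symm⟩,
    fun a ha b hb hab => ⟨hS a ha b hb hab, hS b hb a ha hab.symm⟩,
    fun s hs t ht => ⟨harc s t (fun h => hs (h ▸ ht)) (.inl hs), hback t ht s hs⟩,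
    fun s hs t ht => hamiltonPathFromTo_of_forall_arc harc hs ht⟩

/-- A non-strong semicomplete digraph without induced transitive triangles has exactly
two strong components `X1, X2`, with `X1` minimal, both complete, `X1 ↦ X2`, and for all
`s ∈ X1`, `t ∈ X2` there is a Hamilton path from `s` to `t`. -/
theorem nonstrong_semicomplete_structure {V : Type*} [Finite V] (A : V → V → Prop)
    (hirr : ∀ v, ¬ A v v) (hsemi : Semicomplete A)
    (hTT : ¬ HasInducedTransitiveTriangle A) (hnstrong : ¬ Strong A) :
    ∃ X1 X2 : Set V, X1.Nonempty ∧ X2.Nonempty ∧ Disjoint X1 X2 ∧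
      X1 ∪ X2 = Set.univ ∧
      (∀ u ∈ X1, ∀ v ∈ X1, MutReach A u v) ∧
      (∀ u ∈ X2, ∀ v ∈ X2, MutReach A u v) ∧
      (∀ u ∈ X1, ∀ v ∈ X2, ¬ MutReach A u v) ∧
      (∀ u ∈ X2, ∀ v ∈ X1, ¬ A u v) ∧
      (∀ u ∈ X1, ∀ v ∈ X1, u ≠ v → A u v ∧ A v u) ∧
      (∀ u ∈ X2, ∀ v ∈ X2, u ≠ v → A u v ∧ A v u) ∧
      (∀ s ∈ X1, ∀ t ∈ X2, A s t ∧ ¬ A t s) ∧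
      (∀ s ∈ X1, ∀ t ∈ X2, HamiltonPathFromTo A s t) :=
  nonstrong_semicomplete_structure_general A hsemi hTT hnstrong
end

section
/- If D is a non-strong semicomplete digraph with no induced transitive triangle, then D has exactly two strong components. -/
open Relation

variable {V : Type*}

/-!
In a semicomplete digraph, `¬ ReflTransGen A v u` forces an arc `u → v`, so the strong
components are linearly ordered with all arcs between them pointing forward. Three components
`C₁ < C₂ < C₃` would contain an induced transitive triangle, one vertex in each. Hence if `a`
does not reach `b`, every vertex reaches `a` and every vertex not reached from `a` reaches
everything: the vertices reached from `a` and the rest are the two strong components.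
-/

namespace Semicomplete

variable {A : V → V → Prop}

theorem rel_of_not_reflTransGen (hs : Semicomplete A) {u v : V}
    (h : ¬ ReflTransGen A v u) : A u v :=
  (hs u v fun huv => h (huv ▸ .refl)).resolve_right fun hvu => h (.single hvu)

theorem hasInducedTransitiveTriangle_of_not_reflTransGen (hs : Semicomplete A) {u v w : V}
    (hvu : ¬ ReflTransGen A v u) (hwv : ¬ ReflTransGen A w v) :
    HasInducedTransitiveTriangle A := by
  have hwu : ¬ ReflTransGen A w u := fun hwu => hwv (hwu.tail (hs.rel_of_not_reflTransGen hvu))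
  refine ⟨u, w, v, ?_, ?_, ?_, hs.rel_of_not_reflTransGen hwu,
    hs.rel_of_not_reflTransGen hvu, hs.rel_of_not_reflTransGen hwv,
    fun h => hwu (.single h), fun h => hvu (.single h), fun h => hwv (.single h)⟩
  · rintro rfl; exact hwu .refl
  · rintro rfl; exact hvu .refl
  · rintro rfl; exact hwv .refl

theorem reflTransGen_of_not_reflTransGen (hs : Semicomplete A)
    (hTT : ¬ HasInducedTransitiveTriangle A) {u v : V} (hvu : ¬ ReflTransGen A v u) (w : V) :
    ReflTransGen A u w ∧ ReflTransGen A w v :=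
  ⟨by_contra fun huw => hTT (hs.hasInducedTransitiveTriangle_of_not_reflTransGen huw hvu),
    by_contra fun hwv => hTT (hs.hasInducedTransitiveTriangle_of_not_reflTransGen hvu hwv)⟩

end Semicomplete

theorem nonstrong_semicomplete_two_components_general {V : Type*} (A : V → V → Prop)
    (hsemi : Semicomplete A)
    (hTT : ¬ HasInducedTransitiveTriangle A) (hnstrong : ¬ Strong A) :
    ∃ X1 X2 : Set V, X1.Nonempty ∧ X2.Nonempty ∧ Disjoint X1 X2 ∧
      X1 ∪ X2 = Set.univ ∧
      (∀ u ∈ X1, ∀ v ∈ X1, MutReach A u v) ∧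
      (∀ u ∈ X2, ∀ v ∈ X2, MutReach A u v) ∧
      (∀ u ∈ X1, ∀ v ∈ X2, ¬ MutReach A u v) := by
  obtain ⟨a, b, hab⟩ : ∃ a b, ¬ ReflTransGen A a b := by simpa [Strong] using hnstrong
  have reaches_a (w : V) : ReflTransGen A w a :=
    (hsemi.reflTransGen_of_not_reflTransGen hTT hab w).2
  have reaches_all {v : V} (hv : ¬ ReflTransGen A a v) (w : V) : ReflTransGen A v w :=
    (hsemi.reflTransGen_of_not_reflTransGen hTT hv w).1
  refine ⟨{v | ¬ ReflTransGen A a v}, {v | ReflTransGen A a v}, ⟨b, hab⟩, ⟨a, .refl⟩,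
    Set.disjoint_left.2 fun _ hv₁ hv₂ => hv₁ hv₂, Set.eq_univ_of_forall fun _ => em' _,
    fun u hu v hv => ⟨reaches_all hu v, reaches_all hv u⟩,
    fun u hu v hv => ⟨(reaches_a u).trans hv, (reaches_a v).trans hu⟩,
    fun u hu v hv huv => hu (hv.trans huv.2)⟩

/-- A non-strong semicomplete digraph without induced transitive triangles has exactly
two strong components. -/
theorem nonstrong_semicomplete_two_components {V : Type*} [Finite V] (A : V → V → Prop)
    (hirr : ∀ v, ¬ A v v) (hsemi : Semicomplete A)
    (hTT : ¬ HasInducedTransitiveTriangle A) (hnstrong : ¬ Strong A) :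
    ∃ X1 X2 : Set V, X1.Nonempty ∧ X2.Nonempty ∧ Disjoint X1 X2 ∧
      X1 ∪ X2 = Set.univ ∧
      (∀ u ∈ X1, ∀ v ∈ X1, MutReach A u v) ∧
      (∀ u ∈ X2, ∀ v ∈ X2, MutReach A u v) ∧
      (∀ u ∈ X1, ∀ v ∈ X2, ¬ MutReach A u v) :=
  nonstrong_semicomplete_two_components_general A hsemi hTT hnstrong
end

section
/- Every semicomplete digraph with no induced transitive triangle satisfies the BE-property: for every maximum stable set S (necessarily a single vertex), there exists an S_BE-path partition, i.e., a Hamilton directed path of D starting or ending at the vertex of S. -/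
open Relation

variable {V : Type*}

/-! A maximum stable set of a semicomplete digraph `D` is a single vertex `v`. Insertion sort
along the arc relation orders `D - v` into a Hamilton path `a ⋯ z` (Rédei). If `v → a` or
`z → v`, the path extends through `v` at one end. Otherwise `a → v` and `v → z` are one-way
arcs, so the absence of an induced transitive triangle forces `z → a`, and `b ⋯ z a v` is a
Hamilton path ending at `v`. -/

namespace List

variable {α : Type*} {r : α → α → Prop} [DecidableRel r]

theorem head?_orderedInsert (a : α) : ∀ l : List α,
    (l.orderedInsert r a).head? = some a ∨ (l.orderedInsert r a).head? = l.head?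
  | [] => by simp
  | b :: l => by by_cases h : r a b <;> simp [h]

theorem IsChain.orderedInsert {a : α} : ∀ {l : List α}, l.IsChain r →
    (∀ b ∈ l, r a b ∨ r b a) → (l.orderedInsert r a).IsChain r
  | [], _, _ => isChain_singleton a
  | b :: l, hl, hadj => by
    by_cases hab : r a b
    · simpa [hab] using hl.cons_cons hab
    · have hba : r b a := (hadj b mem_cons_self).resolve_left hab
      have ih : (l.orderedInsert r a).IsChain r :=
        hl.tail.orderedInsert fun c hc => hadj c (mem_cons_of_mem b hc)
      rw [orderedInsert_of_not_le r l hab]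
      refine ih.cons fun c hc => ?_
      rcases head?_orderedInsert (r := r) a l with h | h <;> rw [h] at hc
      · cases hc; exact hba
      · exact hl.rel_head? hc

theorem isChain_insertionSort {l : List α} (hl : l.Pairwise fun a b => r a b ∨ r b a) :
    (l.insertionSort r).IsChain r := by
  induction l with
  | nil => exact isChain_nil
  | cons a l ih =>
    rw [pairwise_cons] at hl
    exact (ih hl.2).orderedInsert fun b hb => hl.1 b ((perm_insertionSort r l).subset hb)

end List

open List

theorem Semicomplete.rel_of_strict_two_path {A : V → V → Prop} (hsemi : Semicomplete A)
    (hTT : ¬ HasInducedTransitiveTriangle A) {x y z : V}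
    (hxy : A x y) (hyx : ¬ A y x) (hyz : A y z) (hzy : ¬ A z y) : A z x := by
  by_contra hzx
  have hxz : x ≠ z := by rintro rfl; exact hyx hyz
  have hxy' : x ≠ y := by rintro rfl; exact hyx hxy
  have hzy' : z ≠ y := by rintro rfl; exact hzy hyz
  exact hTT ⟨x, z, y, hxz, hxy', hzy', (hsemi x z hxz).resolve_right hzx, hxy, hyz,
    hzx, hyx, hzy⟩

theorem Semicomplete.exists_isChain_perm_cons_endpoint {A : V → V → Prop}
    (hsemi : Semicomplete A) (hTT : ¬ HasInducedTransitiveTriangle A) {v : V} {p : List V}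
    (hp : p.IsChain A) (hv : v ∉ p) :
    ∃ l : List V, l ~ v :: p ∧ l.IsChain A ∧ (l.head? = some v ∨ l.getLast? = some v) := by
  rcases p with _ | ⟨a, t⟩
  · exact ⟨[v], .refl _, isChain_singleton v, .inl rfl⟩
  have hav : a ≠ v := by rintro rfl; exact hv mem_cons_self
  by_cases hva : A v a
  · exact ⟨v :: a :: t, .refl _, hp.cons_cons hva, .inl rfl⟩
  obtain ⟨z, hz⟩ : ∃ z, (a :: t).getLast? = some z :=
    ⟨_, getLast?_eq_some_getLast (cons_ne_nil a t)⟩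
  have hzv : z ≠ v := by rintro rfl; exact hv (mem_of_getLast? hz)
  by_cases hzv' : A z v
  · refine ⟨a :: t ++ [v], perm_append_singleton _ _, hp.append (isChain_singleton v) ?_,
      .inr getLast?_concat⟩
    simpa [hz] using hzv'
  have hav' : A a v := (hsemi a v hav).resolve_right hva
  have hvz : A v z := (hsemi v z hzv.symm).resolve_right hzv'
  have hza : A z a := hsemi.rel_of_strict_two_path hTT hav' hva hvz hzv'
  rcases t with _ | ⟨b, t⟩
  · obtain rfl : a = z := by simpa using hz
    exact (hva hvz).elim
  rw [getLast?_cons_cons] at hz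
  refine ⟨b :: t ++ [a, v], perm_append_comm.trans (.swap v a _), ?_,
    .inr (by rw [getLast?_append]; simp)⟩
  exact hp.tail.append (isChain_pair.mpr hav') (by simpa [hz] using hza)

theorem Semicomplete.exists_hamiltonian_path_endpoint [Finite V] {A : V → V → Prop}
    (hsemi : Semicomplete A) (hTT : ¬ HasInducedTransitiveTriangle A) (v : V) :
    ∃ l : List V, IsDiPath A l ∧ (∀ u, u ∈ l) ∧
      (l.head? = some v ∨ l.getLast? = some v) := by
  classical
  obtain ⟨m, hm, hmem⟩ := Finite.exists_univ_list V
  have hpm : (m.erase v).insertionSort A ~ m.erase v := perm_insertionSort A _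
  have hp : ((m.erase v).insertionSort A).IsChain A :=
    isChain_insertionSort <| (hm.erase v).pairwise_of_forall_ne fun a _ b _ hab => hsemi a b hab
  obtain ⟨l, hperm, hchain, hend⟩ :=
    hsemi.exists_isChain_perm_cons_endpoint hTT hp fun h => hm.not_mem_erase (hpm.subset h)
  have hlm : l ~ m := hperm.trans ((hpm.cons v).trans (perm_cons_erase (hmem v)).symm)
  have hall : ∀ u, u ∈ l := fun u => hlm.mem_iff.mpr (hmem u)
  exact ⟨l, ⟨ne_nil_of_mem (hall v), hlm.nodup_iff.mpr hm, hchain⟩, hall, hend⟩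

theorem Semicomplete.exists_eq_singleton_of_isMaxStable [Nonempty V] {A : V → V → Prop}
    (hsemi : Semicomplete A) {S : Set V} (hS : IsMaxStable A S) : ∃ v, S = {v} := by
  obtain ⟨u⟩ := ‹Nonempty V›
  have hsub : S.Subsingleton := fun a ha b hb =>
    by_contra fun hab => hS.1 a ha b hb hab (hsemi a b hab)
  have hpos : 1 ≤ S.ncard := by
    simpa using hS.2 {u} fun a ha b hb hab => (hab (ha.trans hb.symm)).elim
  rcases hsub.eq_empty_or_singleton with rfl | hS1
  · simp at hpos
  · exact hS1

theorem isBEPartition_singleton {A : V → V → Prop} {v : V} {l : List V} (hl : IsDiPath A l)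
    (hall : ∀ u, u ∈ l) (hend : l.head? = some v ∨ l.getLast? = some v) :
    IsBEPartition A {v} {l} := by
  refine ⟨⟨⟨?_, fun u => ⟨l, ⟨rfl, hall u⟩, fun _ h => h.1⟩⟩, ?_⟩, ?_⟩
  · rintro _ rfl
    exact hl
  · rintro _ rfl
    exact ⟨v, ⟨hall v, rfl⟩, fun _ h => h.2⟩
  · rintro _ rfl _ _ rfl
    exact hend

theorem semicomplete_BEProperty_general {V : Type*} [Finite V] (A : V → V → Prop)
    (hsemi : Semicomplete A)
    (hTT : ¬ HasInducedTransitiveTriangle A) :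
    BEProperty A := by
  intro S hS
  rcases isEmpty_or_nonempty V with _ | _
  · exact ⟨∅, by simp [IsBEPartition, IsSPartition, IsPathPartition]⟩
  obtain ⟨v, rfl⟩ := hsemi.exists_eq_singleton_of_isMaxStable hS
  obtain ⟨l, hl, hall, hend⟩ := hsemi.exists_hamiltonian_path_endpoint hTT v
  exact ⟨{l}, isBEPartition_singleton hl hall hend⟩

/-- Every semicomplete digraph without induced transitive triangles satisfies the
BE-property. -/
theorem semicomplete_BEProperty {V : Type*} [Finite V] (A : V → V → Prop)
    (hirr : ∀ v, ¬ A v v) (hsemi : Semicomplete A)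
    (hTT : ¬ HasInducedTransitiveTriangle A) :
    BEProperty A :=
  semicomplete_BEProperty_general A hsemi hTT
end

section
/- If D is a digraph with no induced transitive triangle whose underlying graph is perfect, then D is BE-diperfect. -/
open Relation

variable {V : Type*}

/-!
Lovász's perfect graph theorem, in Gasparian's form, covers the vertices of a perfect graph by
`α` cliques. In a minimal counterexample `W`, with `ω = ω(W)` and `α = α(W)`, a maximum clique
together with the classes of `α`-clique-covers of `W \ {v}`, for `v` in that clique, gives
`αω + 1` cliques. Each of them is avoided by some maximum independent set (otherwise removing it
would lower `α`), and each maximum independent set avoids at most one of them. So the matrix of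
intersection sizes is `J - I`, the incidence vectors of the cliques are linearly independent, and
`αω + 1 ≤ |W| ≤ αω` (colour `W` with `ω` colours), a contradiction.

Given a maximum stable set `S` of a digraph, each class of such a cover by `α = |S|` cliques
contains exactly one vertex of `S`. Without induced transitive triangles, the Hamiltonian path of
a semicomplete digraph given by Rédei's theorem can be rerouted to end at any prescribed vertex;
these paths form the `S`-BE-path partition.
-/

theorem Set.InjOn.surjOn_Iio_ncard {S : Set V} {f : V → ℕ} (hinj : S.InjOn f)
    (hf : S.MapsTo f (Set.Iio S.ncard)) : S.SurjOn f (Set.Iio S.ncard) :=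
  (Set.eq_of_subset_of_ncard_le hf.image_subset
    (by rw [hinj.ncard_image, Set.ncard_Iio_nat])).symm.subset

theorem Fintype.eq_of_sum_add_one_eq_card {ι : Type*} [Fintype ι] {F : ι → ℕ}
    (hF : ∀ i, F i ≤ 1) (hsum : ∑ i, F i + 1 = Fintype.card ι) {i j : ι} (hi : F i = 0)
    (hj : F j = 0) : i = j := by
  classical
  by_contra hij
  have hpair : ∑ k ∈ {i, j}, F k = 0 := by simp [Finset.sum_pair hij, hi, hj]
  have hrest : ∑ k ∈ Finset.univ \ {i, j}, F k ≤ (Finset.univ \ {i, j}).card :=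
    Finset.sum_le_card_nsmul _ _ 1 (fun k _ => hF k) |>.trans (by simp)
  rw [Finset.card_sdiff_of_subset (Finset.subset_univ _), Finset.card_pair hij,
    Finset.card_univ] at hrest
  have := Finset.sum_sdiff (f := F) (Finset.subset_univ {i, j})
  have h2 : 2 ≤ Fintype.card ι := by
    simpa [Finset.card_pair hij] using Finset.card_le_univ {i, j}
  omega

theorem card_le_of_card_inter_eq_ite {ι : Type*} [DecidableEq V] [Fintype ι] [DecidableEq ι]
    [Nontrivial ι] {U : Finset V} {Q K : ι → Finset V} (hQ : ∀ i, Q i ⊆ U)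
    (hQK : ∀ i j, (Q i ∩ K j).card = if i = j then 0 else 1) : Fintype.card ι ≤ U.card := by
  let x : ι → U → ℚ := fun i u => if (u : V) ∈ Q i then 1 else 0
  have hx : LinearIndependent ℚ x := by
    rw [Fintype.linearIndependent_iff]
    intro c hc
    -- pairing the relation with the indicator of `K j` leaves the sum of the `c i`, `i ≠ j`
    have hpair : ∀ j, ∑ i, c i = c j := fun j => by
      have h0 : ∑ u ∈ U.filter (· ∈ K j), ∑ i, c i * (if u ∈ Q i then 1 else 0) = 0 :=
        Finset.sum_eq_zero fun u hu => by
          simpa [x] using congrFun hc ⟨u, (Finset.mem_filter.1 hu).1⟩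
      have hcol : ∀ i, ∑ u ∈ U.filter (· ∈ K j), c i * (if u ∈ Q i then 1 else 0) =
          c i - if i = j then c i else 0 := fun i => by
        rw [← Finset.mul_sum, Finset.sum_boole, Finset.filter_filter]
        have : U.filter (fun u => u ∈ K j ∧ u ∈ Q i) = Q i ∩ K j := by
          ext u
          simp only [Finset.mem_filter, Finset.mem_inter]
          exact ⟨fun h => ⟨h.2.2, h.2.1⟩, fun h => ⟨hQ i h.1, h.2, h.1⟩⟩
        rw [this, hQK]
        split_ifs <;> simp
      rw [Finset.sum_comm, Finset.sum_congr rfl fun i _ => hcol i, Finset.sum_sub_distrib,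
        Finset.sum_ite_eq' Finset.univ j c, if_pos (Finset.mem_univ j)] at h0
      linarith
    have hsum : (Fintype.card ι - 1 : ℚ) * ∑ i, c i = 0 := by
      have : ∑ i, c i = Fintype.card ι * ∑ i, c i := by
        conv_lhs => rw [Finset.sum_congr rfl fun j _ => (hpair j).symm]
        simp
      linarith
    have hcard : (Fintype.card ι - 1 : ℚ) ≠ 0 := by
      have := Fintype.one_lt_card (α := ι)
      rw [sub_ne_zero]
      exact_mod_cast this.ne'
    intro j
    rw [← hpair j]
    exact (mul_eq_zero.1 hsum).resolve_left hcard
  simpa using hx.fintype_card_le_finrank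

namespace SimpleGraph

variable (G : SimpleGraph V)

theorem compl_induce (W : Set V) : (G.induce W)ᶜ = Gᶜ.induce W := by
  ext u v
  simp [Subtype.ext_iff]

variable {G}

theorem IsClique.card_le_cliqueNum_induce [Finite V] {W : Set V} {T : Finset V}
    (hTW : ↑T ⊆ W) (hT : G.IsClique (T : Set V)) : T.card ≤ (G.induce W).cliqueNum := by
  classical
  have hcard : (T.subtype (· ∈ W)).card = T.card := by
    rw [Finset.card_subtype, Finset.filter_true_of_mem fun x hx => hTW hx]
  rw [← hcard]
  refine IsClique.card_le_cliqueNum (tc := isClique_induce_iff.2 ?_)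
  convert hT
  ext x
  simpa using fun hx => hTW hx

theorem exists_isNClique_cliqueNum_induce (W : Set V) :
    ∃ T : Finset V, ↑T ⊆ W ∧ G.IsNClique (G.induce W).cliqueNum T := by
  obtain ⟨t, ht⟩ := (G.induce W).exists_isNClique_cliqueNum
  exact ⟨t.map (.subtype _), by simp, (isNClique_induce_iff W t _).1 ht⟩

theorem IsIndepSet.card_le_indepNum_induce [Finite V] {W : Set V} {T : Finset V}
    (hTW : ↑T ⊆ W) (hT : G.IsIndepSet (T : Set V)) : T.card ≤ (G.induce W).indepNum := by
  rw [← cliqueNum_compl, compl_induce]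
  exact IsClique.card_le_cliqueNum_induce hTW ((isClique_compl G).2 hT)

theorem exists_isNIndepSet_indepNum_induce (W : Set V) :
    ∃ T : Finset V, ↑T ⊆ W ∧ G.IsNIndepSet (G.induce W).indepNum T := by
  simpa [← cliqueNum_compl, compl_induce, ← isNClique_compl] using
    exists_isNClique_cliqueNum_induce (G := Gᶜ) W

theorem indepNum_induce_mono [Finite V] {W W' : Set V} (h : W' ⊆ W) :
    (G.induce W').indepNum ≤ (G.induce W).indepNum := by
  obtain ⟨T, hT, hTi⟩ := exists_isNIndepSet_indepNum_induce (G := G) W'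
  exact hTi.card_eq ▸ hTi.isIndepSet.card_le_indepNum_induce (hT.trans h)

theorem Colorable.card_le_mul_indepNum [Finite V] {n : ℕ} (h : G.Colorable n) :
    Nat.card V ≤ n * G.indepNum := by
  classical
  have := Fintype.ofFinite V
  obtain ⟨C⟩ := h
  rw [Nat.card_eq_fintype_card, ← Finset.card_univ,
    Finset.card_eq_sum_card_fiberwise (f := C) (t := Finset.univ) (by simp)]
  calc ∑ c, (Finset.univ.filter (C · = c)).card
      ≤ ∑ _c : Fin n, G.indepNum := Finset.sum_le_sum fun c _ => IsIndepSet.card_le_indepNum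
        (by simpa [Coloring.colorClass] using C.isIndepSet_colorClass c)
    _ = n * G.indepNum := by simp

theorem IsIndepSet.card_inter_le_one [DecidableEq V] {T C : Finset V}
    (hT : G.IsIndepSet (T : Set V)) (hC : G.IsClique (C : Set V)) : (T ∩ C).card ≤ 1 :=
  Finset.card_le_one.2 fun u hu v hv => by
    by_contra huv
    simp only [Finset.mem_inter] at hu hv
    exact hT hu.1 hv.1 huv (hC hu.2 hv.2 huv)

def IsCliqueCoverOn (G : SimpleGraph V) (W : Set V) (k : ℕ) (f : V → ℕ) : Prop :=
  (∀ u ∈ W, ∀ v ∈ W, u ≠ v → f u = f v → G.Adj u v) ∧ ∀ u ∈ W, f u < k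

theorem IsCliqueCoverOn.mono {W : Set V} {k k' : ℕ} {f : V → ℕ} (hf : G.IsCliqueCoverOn W k f)
    (hk : k ≤ k') : G.IsCliqueCoverOn W k' f :=
  ⟨hf.1, fun u hu => (hf.2 u hu).trans_le hk⟩

theorem IsCliqueCoverOn.exists_extend {W W' : Set V} {k : ℕ} {f : V → ℕ}
    (hf : G.IsCliqueCoverOn W' k f) (hQ : G.IsClique (W \ W')) :
    ∃ f', G.IsCliqueCoverOn W (k + 1) f' := by
  classical
  refine ⟨fun u => if u ∈ W' then f u else k, fun u hu v hv huv huv' => ?_, fun u hu => ?_⟩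
  · by_cases hu' : u ∈ W' <;> by_cases hv' : v ∈ W' <;> simp only [hu', hv', if_true,
      if_false] at huv'
    · exact hf.1 u hu' v hv' huv huv'
    · exact absurd huv' (hf.2 u hu').ne
    · exact absurd huv'.symm (hf.2 v hv').ne
    · exact hQ ⟨hu, hu'⟩ ⟨hv, hv'⟩ huv
  · dsimp only
    split_ifs with hu'
    · exact (hf.2 u hu').trans (Nat.lt_succ_self k)
    · exact Nat.lt_succ_self k

theorem exists_isNIndepSet_subset_diff [Finite V] {W Q : Set V}
    (hmin : ∀ W' ⊂ W, ∃ f, G.IsCliqueCoverOn W' (G.induce W').indepNum f)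
    (hW : ¬ ∃ f, G.IsCliqueCoverOn W (G.induce W).indepNum f) (hQ : G.IsClique Q) :
    ∃ K : Finset V, ↑K ⊆ W \ Q ∧ G.IsNIndepSet (G.induce W).indepNum K := by
  by_cases hle : (G.induce W).indepNum ≤ (G.induce (W \ Q)).indepNum
  · obtain ⟨T, hTW, hT⟩ := exists_isNIndepSet_indepNum_induce (G := G) (W \ Q)
    obtain ⟨K, hKT, hK⟩ := Finset.exists_subset_card_eq (hT.card_eq ▸ hle)
    exact ⟨K, (Finset.coe_subset.2 hKT).trans hTW, hT.isIndepSet.mono hKT, hK⟩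
  · -- otherwise `Q` can be added as one more class to a cover of `W \ Q`
    rw [not_le] at hle
    have hss : W \ Q ⊂ W := Set.sdiff_subset.ssubset_of_ne fun h => by rw [h] at hle; omega
    obtain ⟨f, hf⟩ := hmin _ hss
    obtain ⟨f', hf'⟩ := hf.exists_extend
      (by rw [Set.sdiff_sdiff_right_self]; exact hQ.subset Set.inter_subset_right)
    exact absurd ⟨f', hf'.mono hle⟩ hW

open Classical in
/-- With `S₀` a maximum clique of `W` and `g v` a cover of `W \ {v}` by `w` cliques, these are
the `|S₀| w + 1` cliques of Gasparian's argument. -/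
noncomputable def gasparianCliques [Fintype V] (W : Set V) (S₀ : Finset V) (g : V → V → ℕ)
    (w : ℕ) : Option (S₀ × Fin w) → Finset V
  | none => S₀
  | some (v, c) => {u | u ∈ W ∧ u ≠ v ∧ g v u = c}

theorem sum_card_inter_gasparianCliques [Fintype V] [DecidableEq V] {W : Set V}
    {S₀ T : Finset V} {g : V → V → ℕ} {w : ℕ} (hT : ↑T ⊆ W)
    (hg : ∀ v ∈ S₀, ∀ u ∈ W, u ≠ v → g v u < w) :
    ∑ j, (T ∩ gasparianCliques W S₀ g w j).card = S₀.card * T.card := by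
  have hrow : ∀ v : S₀, ∑ c : Fin w, (T ∩ gasparianCliques W S₀ g w (some (v, c))).card =
      (T.erase v).card := fun v => by
    rw [Finset.card_eq_sum_card_fiberwise (f := g v) (t := Finset.range w) fun u hu => by
      simpa using hg v v.2 u (hT (Finset.mem_of_mem_erase hu)) (Finset.ne_of_mem_erase hu),
      ← Fin.sum_univ_eq_sum_range]
    refine Finset.sum_congr rfl fun c _ => congrArg Finset.card ?_
    ext u
    simp only [gasparianCliques, Finset.mem_inter, Finset.mem_filter,
      Finset.mem_univ, Finset.mem_erase, true_and]
    constructor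
    · rintro ⟨huT, -, huv, hc⟩
      exact ⟨⟨huv, huT⟩, hc⟩
    · rintro ⟨⟨huv, huT⟩, hc⟩
      exact ⟨huT, hT huT, huv, hc⟩
  have herase : ∀ v, (T.erase v).card + (if v ∈ T then 1 else 0) = T.card := fun v => by
    split_ifs with hv
    · exact Finset.card_erase_add_one hv
    · simp [Finset.erase_eq_of_notMem hv]
  rw [Fintype.sum_option, Fintype.sum_prod_type, Finset.sum_congr rfl fun v _ => hrow v,
    Finset.sum_coe_sort S₀ fun v => (T.erase v).card]
  have := Finset.sum_congr rfl fun v (_ : v ∈ S₀) => herase v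
  rw [Finset.sum_add_distrib, Finset.sum_boole, Finset.filter_mem_eq_inter] at this
  simp only [gasparianCliques, Finset.inter_comm T S₀]
  simpa [add_comm] using this

theorem coe_gasparianCliques_subset [Fintype V] {W : Set V} {S₀ : Finset V} {g : V → V → ℕ}
    {w : ℕ} (hS₀ : ↑S₀ ⊆ W) (j : Option (S₀ × Fin w)) :
    ↑(gasparianCliques W S₀ g w j) ⊆ W := by
  rcases j with _ | ⟨v, c⟩
  · exact hS₀
  · intro u hu
    simp only [gasparianCliques, Finset.coe_filter, Finset.mem_univ, true_and] at hu
    exact hu.1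

theorem isClique_gasparianCliques [Fintype V] {W : Set V} {S₀ : Finset V} {g : V → V → ℕ}
    {w : ℕ} (hS₀ : G.IsClique (S₀ : Set V))
    (hg : ∀ v ∈ S₀, G.IsCliqueCoverOn (W \ {v}) w (g v)) (j : Option (S₀ × Fin w)) :
    G.IsClique (gasparianCliques W S₀ g w j : Set V) := by
  rcases j with _ | ⟨v, c⟩
  · exact hS₀
  · intro u hu x hx hux
    simp only [gasparianCliques, Finset.coe_filter, Finset.mem_univ, true_and] at hu hx
    exact (hg v v.2).1 u ⟨hu.1, hu.2.1⟩ x ⟨hx.1, hx.2.1⟩ hux (hu.2.2.trans hx.2.2.symm)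

theorem eq_of_inter_gasparianCliques_eq_empty [Fintype V] [DecidableEq V] {W : Set V}
    {S₀ T : Finset V} {g : V → V → ℕ} {w : ℕ} (hS₀ : G.IsClique (S₀ : Set V))
    (hg : ∀ v ∈ S₀, G.IsCliqueCoverOn (W \ {v}) w (g v)) (hT : G.IsIndepSet (T : Set V))
    (hTW : ↑T ⊆ W) (hTw : T.card = w) {i j : Option (S₀ × Fin w)}
    (hi : T ∩ gasparianCliques W S₀ g w i = ∅)
    (hj : T ∩ gasparianCliques W S₀ g w j = ∅) : i = j := by
  -- `T` meets the `|S₀| w + 1` cliques in `|S₀| w` vertices in total, at most one in each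
  refine Fintype.eq_of_sum_add_one_eq_card
    (fun j => hT.card_inter_le_one (isClique_gasparianCliques hS₀ hg j)) ?_ (by simp [hi])
    (by simp [hj])
  rw [sum_card_inter_gasparianCliques hTW fun v hv u hu huv => (hg v hv).2 u ⟨hu, huv⟩, hTw]
  simp

theorem exists_isCliqueCoverOn_of_forall_ssubset [Finite V] {W : Set V}
    (hW : (G.induce W).Colorable (G.induce W).cliqueNum)
    (hmin : ∀ W' ⊂ W, ∃ f, G.IsCliqueCoverOn W' (G.induce W').indepNum f) :
    ∃ f, G.IsCliqueCoverOn W (G.induce W).indepNum f := by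
  classical
  have := Fintype.ofFinite V
  by_contra hbad
  set w := (G.induce W).indepNum
  obtain ⟨x, hx⟩ : W.Nonempty :=
    Set.nonempty_iff_ne_empty.2 fun h => hbad ⟨0, by simp [h, IsCliqueCoverOn]⟩
  obtain ⟨S₀, hS₀W, hS₀⟩ := exists_isNClique_cliqueNum_induce (G := G) W
  choose! g hg using fun v (hv : v ∈ W) =>
    (hmin _ (Set.sdiff_singleton_ssubset.2 hv)).imp fun g hg =>
      hg.mono (indepNum_induce_mono (G := G) Set.sdiff_subset)
  have hgS₀ : ∀ v ∈ S₀, G.IsCliqueCoverOn (W \ {v}) w (g v) := fun v hv => hg v (hS₀W hv)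
  set Q := gasparianCliques W S₀ g w
  have hQ := isClique_gasparianCliques hS₀.isClique hgS₀
  choose K hKW hK using fun j => exists_isNIndepSet_subset_diff hmin hbad (hQ j)
  have hQK : ∀ i j, (Q i ∩ K j).card = if i = j then 0 else 1 := fun i j => by
    have hdisj : K j ∩ Q j = ∅ := Finset.eq_empty_of_forall_notMem fun u hu =>
      (hKW j (Finset.mem_inter.1 hu).1).2 (Finset.mem_inter.1 hu).2
    split_ifs with hij
    · rw [hij, Finset.inter_comm, hdisj, Finset.card_empty]
    · rw [Finset.inter_comm]
      refine le_antisymm ((hK j).isIndepSet.card_inter_le_one (hQ i)) (Finset.card_pos.2 ?_)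
      exact Finset.nonempty_iff_ne_empty.2 fun h => hij <|
        eq_of_inter_gasparianCliques_eq_empty hS₀.isClique hgS₀ (hK j).isIndepSet
          (fun u hu => (hKW j hu).1) (hK j).card_eq h hdisj
  have hω : 0 < (G.induce W).cliqueNum :=
    IsClique.card_le_cliqueNum_induce (T := {x}) (by simpa using hx) (by simp)
  have hw : 0 < w :=
    IsIndepSet.card_le_indepNum_induce (T := {x}) (by simpa using hx) (by simp)
  have : Nonempty S₀ := (Finset.card_pos.1 (hS₀.card_eq ▸ hω)).to_subtype
  have : Nonempty (Fin w) := ⟨⟨0, hw⟩⟩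
  have hupper := card_le_of_card_inter_eq_ite (U := W.toFinset)
    (fun j => by simpa using coe_gasparianCliques_subset hS₀W j) hQK
  have hlower := hW.card_le_mul_indepNum
  simp only [Fintype.card_option, Fintype.card_prod, Fintype.card_coe, Fintype.card_fin,
    hS₀.card_eq, Set.toFinset_card] at hupper
  rw [Nat.card_eq_fintype_card] at hlower
  change _ ≤ _ * w at hlower
  omega

end SimpleGraph

theorem GraphPerfect.exists_isCliqueCoverOn [Finite V] {G : SimpleGraph V}
    (hG : GraphPerfect G) (W : Set V) : ∃ f, G.IsCliqueCoverOn W (G.induce W).indepNum f := by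
  induction W using WellFoundedLT.induction with
  | _ W ih =>
    exact SimpleGraph.exists_isCliqueCoverOn_of_forall_ssubset
      (SimpleGraph.chromaticNumber_le_iff_colorable.1 (hG W).le) ih

section HamiltonPaths

variable {A : V → V → Prop}

theorem exists_perm_cons_isChain {v : V} :
    ∀ {q : List V}, (∀ u ∈ q, DAdj A v u) → q.IsChain A →
      ∃ r : List V, r.Perm (v :: q) ∧ r.IsChain A ∧ (r.head? = some v ∨ r.head? = q.head?)
  | [], _, _ => ⟨[v], .refl _, .singleton _, .inl rfl⟩
  | a :: q, hadj, hq => by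
    by_cases hva : A v a
    · exact ⟨v :: a :: q, .refl _, hq.cons_cons hva, .inl rfl⟩
    have hav : A a v := (hadj a List.mem_cons_self).resolve_left hva
    obtain ⟨r, hrq, hr, hhead⟩ :=
      exists_perm_cons_isChain (fun u hu => hadj u (List.mem_cons_of_mem a hu)) hq.tail
    refine ⟨a :: r, (hrq.cons a).trans (.swap v a q), hr.cons fun y hy => ?_, .inr rfl⟩
    rcases hhead with h | h <;> rw [h] at hy
    · cases hy; exact hav
    · exact hq.rel_head? hy

/-- Rédei's theorem: a semicomplete digraph has a Hamiltonian path. -/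
theorem exists_perm_isChain_of_pairwise {l : List V} (hl : l.Pairwise (DAdj A)) :
    ∃ r : List V, r.Perm l ∧ r.IsChain A := by
  induction hl with
  | nil => exact ⟨[], .nil, .nil⟩
  | @cons v l hv _ ih =>
    obtain ⟨r, hrl, hr⟩ := ih
    obtain ⟨p, hpr, hp, -⟩ := exists_perm_cons_isChain (fun u hu => hv u (hrl.mem_iff.1 hu)) hr
    exact ⟨p, hpr.trans (hrl.cons v), hp⟩

theorem exists_perm_cons_isChain_endpoint (hTT : ¬ HasInducedTransitiveTriangle A) {s : V}
    {r : List V} (hr : r.IsChain A) (hs : s ∉ r) (hadj : (s :: r).Pairwise (DAdj A)) :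
    ∃ p : List V, p.Perm (s :: r) ∧ p.IsChain A ∧
      (p.head? = some s ∨ p.getLast? = some s) := by
  obtain ⟨hsr, hrr⟩ := List.pairwise_cons.1 hadj
  obtain rfl | ⟨m, b, rfl⟩ := r.eq_nil_or_concat
  · exact ⟨[s], .refl _, .singleton _, .inl rfl⟩
  rw [List.concat_eq_append] at *
  by_cases hbs : A b s
  · refine ⟨m ++ [b] ++ [s], List.perm_append_singleton s _, hr.append (.singleton s) ?_,
      .inr (by simp)⟩
    simpa using hbs
  have hsb : A s b := (hsr b (by simp)).resolve_right hbs
  cases m with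
  | nil => exact ⟨[s, b], .refl _, .cons_cons hsb (.singleton b), .inl rfl⟩
  | cons a m =>
    by_cases hsa : A s a
    · exact ⟨s :: a :: (m ++ [b]), .refl _, hr.cons_cons hsa, .inl rfl⟩
    have has : A a s := (hsr a (by simp)).resolve_left hsa
    by_cases hba : A b a
    · exact ⟨s :: b :: a :: m, ((List.perm_append_singleton b (a :: m)).symm).cons s,
        .cons_cons hsb (.cons_cons hba hr.left_of_append), .inl rfl⟩
    have hab : a ≠ b := fun h => hbs (h ▸ has)
    have hab' : A a b := ((List.pairwise_cons.1 hrr).1 b (by simp)).resolve_right hba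
    exact absurd ⟨a, b, s, hab, fun h => hs (by simp [h]), fun h => hs (by simp [h]),
      hab', has, hsb, hba, hsa, hbs⟩ hTT

end HamiltonPaths

section BEPartition

variable {A : V → V → Prop}

theorem exists_isDiPath_endpoint (hTT : ¬ HasInducedTransitiveTriangle A) {C : Finset V}
    (hC : ∀ u ∈ C, ∀ v ∈ C, u ≠ v → DAdj A u v) {s : V} (hs : s ∈ C) :
    ∃ l : List V, IsDiPath A l ∧ (∀ v, v ∈ l ↔ v ∈ C) ∧
      (l.head? = some s ∨ l.getLast? = some s) := by
  classical
  set q := (C.erase s).toList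
  have hsq : (s :: q).Nodup := List.nodup_cons.2 ⟨by simp [q], (C.erase s).nodup_toList⟩
  have hmem : ∀ v, v ∈ s :: q ↔ v ∈ C := fun v => by
    by_cases hv : v = s <;> simp [q, hv, hs]
  have hpair : (s :: q).Pairwise (DAdj A) :=
    hsq.pairwise_of_forall_ne fun u hu v hv huv => hC u ((hmem u).1 hu) v ((hmem v).1 hv) huv
  obtain ⟨r, hrq, hr⟩ := exists_perm_isChain_of_pairwise (List.pairwise_cons.1 hpair).2
  have hsr : (s :: r).Perm (s :: q) := hrq.cons s
  obtain ⟨p, hp, hpc, hend⟩ := exists_perm_cons_isChain_endpoint hTT hr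
    (fun h => (List.nodup_cons.1 hsq).1 (hrq.mem_iff.1 h))
    ((hsr.pairwise_iff fun h => Or.symm h).2 hpair)
  refine ⟨p, ⟨?_, (hp.trans hsr).nodup_iff.2 hsq, hpc⟩, fun v => ?_, hend⟩
  · exact List.ne_nil_of_mem (hp.symm.subset List.mem_cons_self)
  · rw [(hp.trans hsr).mem_iff, hmem]

theorem exists_isBEPartition_of_cliqueCover [Finite V] (hTT : ¬ HasInducedTransitiveTriangle A)
    {S : Set V} (hS : IsStable A S) {f : V → ℕ}
    (hf : ∀ u v, u ≠ v → f u = f v → DAdj A u v)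
    (hfS : ∀ v, f v < S.ncard) : ∃ P, IsBEPartition A S P := by
  classical
  have := Fintype.ofFinite V
  have hinj : S.InjOn f := fun s hs t ht hst => by
    by_contra hne
    exact hS s hs t ht hne (hf s t hne hst)
  have hsurj := hinj.surjOn_Iio_ncard fun s _ => hfS s
  have hpath : ∀ s, ∃ l : List V, IsDiPath A l ∧ (∀ v, v ∈ l ↔ f v = f s) ∧
      (l.head? = some s ∨ l.getLast? = some s) := fun s => by
    simpa using exists_isDiPath_endpoint hTT (C := {v | f v = f s})
      (by simpa using fun u hu v hv huv => hf u v huv (hu.trans hv.symm)) (by simp)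
  choose L hLpath hLmem hLend using hpath
  have hLS : ∀ s ∈ S, ∀ t ∈ S, t ∈ L s → t = s := fun s hs t ht hts =>
    hinj ht hs ((hLmem s t).1 hts)
  refine ⟨L '' S, ⟨⟨?_, fun v => ?_⟩, ?_⟩, ?_⟩
  · rintro l ⟨s, -, rfl⟩
    exact hLpath s
  · obtain ⟨s, hs, hsv⟩ := hsurj (hfS v)
    refine ⟨L s, ⟨⟨s, hs, rfl⟩, (hLmem s v).2 hsv.symm⟩, ?_⟩
    rintro l ⟨⟨t, ht, rfl⟩, hvt⟩
    rw [hinj ht hs (((hLmem t v).1 hvt).symm.trans hsv.symm)]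
  · rintro l ⟨s, hs, rfl⟩
    exact ⟨s, ⟨(hLmem s s).2 rfl, hs⟩, fun t ⟨hts, ht⟩ => hLS s hs t ht hts⟩
  · rintro l ⟨s, hs, rfl⟩ t hts ht
    rw [hLS s hs t ht hts]
    exact hLend s

end BEPartition

section Restriction

variable {A : V → V → Prop}

theorem underlyingGraph_restrict (W : Set V) :
    underlyingGraph (fun a b : W => A a b) = (underlyingGraph A).induce W := by
  ext
  simp [underlyingGraph, DAdj, Subtype.ext_iff]

theorem HasInducedTransitiveTriangle.of_restrict {W : Set V}
    (h : HasInducedTransitiveTriangle fun a b : W => A a b) : HasInducedTransitiveTriangle A :=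
  let ⟨a, b, c, hab, hac, hbc, h⟩ := h
  ⟨a, b, c, Subtype.coe_ne_coe.2 hab, Subtype.coe_ne_coe.2 hac, Subtype.coe_ne_coe.2 hbc, h⟩

theorem IsMaxStable.indepNum_underlyingGraph_le [Finite V] {S : Set V} (hS : IsMaxStable A S) :
    (underlyingGraph A).indepNum ≤ S.ncard := by
  obtain ⟨T, hT⟩ := (underlyingGraph A).exists_isNIndepSet_indepNum
  rw [← hT.card_eq, ← Set.ncard_coe_finset]
  exact hS.2 _ fun u hu v hv huv hadj => hT.isIndepSet hu hv huv ⟨huv, hadj⟩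

end Restriction

theorem perfect_underlying_BEDiperfect_general {V : Type*} [Finite V] (A : V → V → Prop)
    (hTT : ¬ HasInducedTransitiveTriangle A)
    (hperf : GraphPerfect (underlyingGraph A)) :
    BEDiperfect A := by
  intro W S hS
  obtain ⟨f, hf, hfα⟩ := hperf.exists_isCliqueCoverOn W
  have hα := hS.indepNum_underlyingGraph_le
  rw [underlyingGraph_restrict] at hα
  exact exists_isBEPartition_of_cliqueCover (hTT ∘ .of_restrict) hS.1 (f := fun v => f v)
    (fun u v huv huv' => (hf u u.2 v v.2 (Subtype.coe_ne_coe.2 huv) huv').2)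
    fun v => (hfα v v.2).trans_le hα

/-- A digraph without induced transitive triangles whose underlying graph is perfect is
BE-diperfect. -/
theorem perfect_underlying_BEDiperfect {V : Type*} [Finite V] (A : V → V → Prop)
    (hirr : ∀ v, ¬ A v v) (hTT : ¬ HasInducedTransitiveTriangle A)
    (hperf : GraphPerfect (underlyingGraph A)) :
    BEDiperfect A :=
  perfect_underlying_BEDiperfect_general A hTT hperf
end

section
/- Let D be a digraph and v a universal vertex of D. If D − v satisfies the α-property, then D satisfies the α-property. -/
open Relation

variable {V : Type*}

/-!
If `v ∈ S`, then `S = {v}` because `v` is universal, so `D` has stability number one and is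
semicomplete; by Rédei's theorem it has a Hamiltonian path, which is an `S`-path partition.
Otherwise `S` is also a maximum stable set of `D - v`; take an `S`-path partition of `D - v` and
insert `v` into any of its paths, which is possible because `v` is adjacent to all of its vertices.
-/

/-- An `S`-path partition of the subdigraph induced by `W`, its paths kept as lists in `V`. -/
def IsSPartitionOn (A : V → V → Prop) (S W : Set V) (P : Set (List V)) : Prop :=
  (∀ l ∈ P, IsDiPath A l ∧ ∀ u ∈ l, u ∈ W) ∧ (∀ u ∈ W, ∃! l, l ∈ P ∧ u ∈ l) ∧
    ∀ l ∈ P, ∃! s, s ∈ l ∧ s ∈ S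

section

variable {A : V → V → Prop} {S W : Set V} {P : Set (List V)} {v : V}

/-- `v` goes right before the first vertex `x` with no arc `x → v` (so that `v → x`), or at the
end if there is none. -/
theorem List.IsChain.exists_split_insert {l : List V} (hl : List.IsChain A l)
    (hadj : ∀ u ∈ l, DAdj A u v) :
    ∃ l₁ l₂, l = l₁ ++ l₂ ∧ List.IsChain A (l₁ ++ v :: l₂) := by
  induction l with
  | nil => exact ⟨[], [], rfl, List.isChain_singleton v⟩
  | cons x t ih =>
    rcases hadj x List.mem_cons_self with hxv | hvx
    · obtain ⟨t₁, t₂, rfl, ht⟩ := ih hl.tail fun u hu => hadj u (List.mem_cons_of_mem x hu)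
      refine ⟨x :: t₁, t₂, rfl, ht.cons fun y hy => ?_⟩
      cases t₁ with
      | nil => simp_all
      | cons a t₁ => exact hl.rel_head? (by simpa using hy)
    · exact ⟨[], x :: t, rfl, List.IsChain.cons_cons hvx hl⟩

theorem List.IsChain.exists_perm_cons {l : List V} (hl : List.IsChain A l)
    (hadj : ∀ u ∈ l, DAdj A u v) :
    ∃ l' : List V, l'.Perm (v :: l) ∧ List.IsChain A l' := by
  obtain ⟨l₁, l₂, rfl, h⟩ := hl.exists_split_insert hadj
  exact ⟨_, List.perm_middle, h⟩

/-- Rédei's theorem. -/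
theorem Semicomplete.exists_chain_perm (hA : Semicomplete A) (L : List V) (hL : L.Nodup) :
    ∃ l : List V, l.Perm L ∧ List.IsChain A l := by
  induction L with
  | nil => exact ⟨[], List.Perm.refl _, List.isChain_nil⟩
  | cons x t ih =>
    obtain ⟨hxt, ht⟩ := List.nodup_cons.mp hL
    obtain ⟨l, hlt, hl⟩ := ih ht
    obtain ⟨l', hl', hch⟩ := hl.exists_perm_cons (v := x) fun u hu =>
      hA u x fun hux => hxt (hux ▸ hlt.mem_iff.mp hu)
    exact ⟨l', hl'.trans (hlt.cons x), hch⟩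

theorem Semicomplete.exists_hamiltonian_diPath [Finite V] [Nonempty V] (hA : Semicomplete A) :
    ∃ l, IsDiPath A l ∧ ∀ u, u ∈ l := by
  obtain ⟨L, hL, hmem⟩ := Finite.exists_univ_list V
  obtain ⟨l, hlL, hl⟩ := hA.exists_chain_perm L hL
  have hall : ∀ u, u ∈ l := fun u => hlL.mem_iff.mpr (hmem u)
  exact ⟨l, ⟨List.ne_nil_of_mem (hall (Classical.arbitrary V)), hlL.nodup_iff.mpr hL, hl⟩, hall⟩

theorem IsMaxStable.eq_singleton_of_isUniversal (hS : IsMaxStable A S) (hv : IsUniversal A v)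
    (hvS : v ∈ S) : S = {v} :=
  Set.eq_singleton_iff_unique_mem.mpr
    ⟨hvS, fun u huS => by_contra fun huv => hS.1 u huS v hvS huv (hv u huv)⟩

theorem IsMaxStable.semicomplete (hS : IsMaxStable A S) (hcard : S.ncard ≤ 1) :
    Semicomplete A := by
  intro u w huw
  by_contra hadj
  have hstable : IsStable A {u, w} := by
    rintro a (rfl | rfl) b (rfl | rfl) hab
    all_goals first | exact absurd rfl hab | unfold DAdj at hadj ⊢; tauto
  have := hS.2 _ hstable
  rw [Set.ncard_pair huw] at this
  omega

theorem IsMaxStable.nonempty [Nonempty V] (hS : IsMaxStable A S) : S.Nonempty := by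
  have hstable : IsStable A {Classical.arbitrary V} := by
    rintro a rfl b rfl hab
    exact absurd rfl hab
  have := hS.2 _ hstable
  rw [Set.ncard_singleton] at this
  exact Set.nonempty_of_ncard_ne_zero (by omega)

theorem IsMaxStable.preimage_val {p : V → Prop} (hS : IsMaxStable A S) (hp : ∀ s ∈ S, p s) :
    IsMaxStable (fun a b : Subtype p => A a.1 b.1) (Subtype.val ⁻¹' S) := by
  refine ⟨fun a ha b hb hab => hS.1 a ha b hb (Subtype.coe_ne_coe.mpr hab), fun T hT => ?_⟩
  have himage : IsStable A (Subtype.val '' T) := by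
    rintro _ ⟨a, ha, rfl⟩ _ ⟨b, hb, rfl⟩ hab
    exact hT a ha b hb fun h => hab (congrArg _ h)
  calc T.ncard = (Subtype.val '' T).ncard :=
        (Set.ncard_image_of_injective T Subtype.val_injective).symm
    _ ≤ S.ncard := hS.2 _ himage
    _ = (Subtype.val ⁻¹' S).ncard :=
      (Set.ncard_preimage_of_injective_subset_range Subtype.val_injective
        fun s hs => ⟨⟨s, hp s hs⟩, rfl⟩).symm

theorem IsDiPath.map_val {p : V → Prop} {l : List (Subtype p)}
    (hl : IsDiPath (fun a b : Subtype p => A a.1 b.1) l) : IsDiPath A (l.map Subtype.val) :=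
  ⟨fun h => hl.1 (List.map_eq_nil_iff.mp h), hl.2.1.map Subtype.val_injective,
    (List.isChain_map _).mpr hl.2.2⟩

theorem IsSPartition.map_val {p : V → Prop} {P : Set (List (Subtype p))}
    (hP : IsSPartition (fun a b : Subtype p => A a.1 b.1) (Subtype.val ⁻¹' S) P) :
    IsSPartitionOn A S {u | p u} (List.map Subtype.val '' P) := by
  refine ⟨?_, ?_, ?_⟩
  · rintro _ ⟨l, hl, rfl⟩
    refine ⟨(hP.1.1 l hl).map_val, fun u hu => ?_⟩
    obtain ⟨x, -, rfl⟩ := List.mem_map.mp hu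
    exact x.2
  · intro u hu
    obtain ⟨l, ⟨hl, hul⟩, huniq⟩ := hP.1.2 ⟨u, hu⟩
    refine ⟨_, ⟨⟨l, hl, rfl⟩, List.mem_map_of_mem hul⟩, ?_⟩
    rintro _ ⟨⟨m, hm, rfl⟩, hum⟩
    obtain ⟨x, hx, rfl⟩ := List.mem_map.mp hum
    rw [huniq m ⟨hm, hx⟩]
  · rintro _ ⟨l, hl, rfl⟩
    obtain ⟨s, ⟨hsl, hsS⟩, huniq⟩ := hP.2 l hl
    refine ⟨s, ⟨List.mem_map_of_mem hsl, hsS⟩, ?_⟩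
    rintro _ ⟨ht, htS⟩
    obtain ⟨x, hx, rfl⟩ := List.mem_map.mp ht
    rw [huniq x ⟨hx, htS⟩]

theorem ExistsUnique.replace {P : Set (List V)} {l₀ l' : List V} {u : V}
    (hcover : ∃! l, l ∈ P ∧ u ∈ l) (hl₀ : l₀ ∈ P) (hmem : u ∈ l' ↔ u ∈ l₀) :
    ∃! l, l ∈ insert l' (P \ {l₀}) ∧ u ∈ l := by
  obtain ⟨m, ⟨hm, hum⟩, huniq⟩ := hcover
  by_cases hml₀ : m = l₀
  · subst hml₀
    refine ⟨l', ⟨Set.mem_insert _ _, hmem.mpr hum⟩, ?_⟩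
    rintro l ⟨rfl | ⟨hl, hne⟩, hul⟩
    · rfl
    · exact absurd (huniq l ⟨hl, hul⟩) hne
  · refine ⟨m, ⟨Set.mem_insert_of_mem _ ⟨hm, hml₀⟩, hum⟩, ?_⟩
    rintro l ⟨rfl | ⟨hl, -⟩, hul⟩
    · exact absurd (huniq l₀ ⟨hl₀, hmem.mp hul⟩).symm hml₀
    · exact huniq l ⟨hl, hul⟩

theorem IsSPartitionOn.replace (hP : IsSPartitionOn A S W P) {l₀ l' : List V} (hl₀ : l₀ ∈ P)
    (hvW : v ∉ W) (hvS : v ∉ S) (hl' : IsDiPath A l') (hmem : ∀ u, u ∈ l' ↔ u = v ∨ u ∈ l₀) :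
    IsSPartitionOn A S (insert v W) (insert l' (P \ {l₀})) := by
  obtain ⟨hpaths, hcover, hsingle⟩ := hP
  have hvP : ∀ l ∈ P, v ∉ l := fun l hl hv => hvW ((hpaths l hl).2 v hv)
  refine ⟨?_, ?_, ?_⟩
  · rintro l (rfl | ⟨hl, -⟩)
    · refine ⟨hl', fun u hu => ?_⟩
      rcases (hmem u).mp hu with rfl | hu
      · exact Set.mem_insert u W
      · exact Set.mem_insert_of_mem v ((hpaths l₀ hl₀).2 u hu)
    · exact ⟨(hpaths l hl).1, fun u hu => Set.mem_insert_of_mem v ((hpaths l hl).2 u hu)⟩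
  · rintro u (rfl | hu)
    · refine ⟨l', ⟨Set.mem_insert _ _, (hmem u).mpr (Or.inl rfl)⟩, ?_⟩
      rintro l ⟨rfl | ⟨hl, -⟩, hul⟩
      · rfl
      · exact absurd hul (hvP l hl)
    · have huv : u ≠ v := fun h => hvW (h ▸ hu)
      exact (hcover u hu).replace hl₀ ((hmem u).trans (or_iff_right huv))
  · rintro l (rfl | ⟨hl, -⟩)
    · obtain ⟨s, ⟨hsl, hsS⟩, huniq⟩ := hsingle l₀ hl₀
      refine ⟨s, ⟨(hmem s).mpr (Or.inr hsl), hsS⟩, fun t ⟨htl, htS⟩ => ?_⟩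
      rcases (hmem t).mp htl with rfl | ht
      · exact absurd htS hvS
      · exact huniq t ⟨ht, htS⟩
    · exact hsingle l hl

theorem IsSPartitionOn.exists_insert (hP : IsSPartitionOn A S W P) (hne : P.Nonempty)
    (hvW : v ∉ W) (hvS : v ∉ S) (hadj : ∀ u ∈ W, DAdj A u v) :
    ∃ P', IsSPartitionOn A S (insert v W) P' := by
  obtain ⟨l₀, hl₀⟩ := hne
  obtain ⟨⟨-, hnd, hch⟩, hl₀W⟩ := hP.1 l₀ hl₀
  obtain ⟨l', hperm, hl'⟩ := List.IsChain.exists_perm_cons hch fun u hu => hadj u (hl₀W u hu)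
  have hvl₀ : v ∉ l₀ := fun h => hvW (hl₀W v h)
  refine ⟨_, hP.replace hl₀ hvW hvS ⟨List.ne_nil_of_mem (hperm.mem_iff.mpr List.mem_cons_self),
    hperm.nodup_iff.mpr (List.nodup_cons.mpr ⟨hvl₀, hnd⟩), hl'⟩ fun u => ?_⟩
  rw [hperm.mem_iff, List.mem_cons]

theorem IsSPartitionOn.isSPartition (hP : IsSPartitionOn A S W P) (hW : ∀ u, u ∈ W) :
    IsSPartition A S P :=
  ⟨⟨fun l hl => (hP.1 l hl).1, fun u => hP.2.1 u (hW u)⟩, hP.2.2⟩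

theorem isSPartition_singleton_of_hamiltonian {l : List V} (hl : IsDiPath A l)
    (hall : ∀ u, u ∈ l) : IsSPartition A {v} {l} :=
  ⟨⟨fun _ hm => hm ▸ hl, fun u => ⟨l, ⟨rfl, hall u⟩, fun _ hm => hm.1⟩⟩,
    fun _ hm => ⟨v, ⟨hm ▸ hall v, rfl⟩, fun _ hs => hs.2⟩⟩

end

theorem universal_alphaProperty_general {V : Type*} [Finite V] (A : V → V → Prop)
    (v : V) (hu : IsUniversal A v)
    (h : AlphaProperty (fun a b : {u : V // u ≠ v} => A a.1 b.1)) :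
    AlphaProperty A := by
  intro S hS
  have : Nonempty V := ⟨v⟩
  by_cases hvS : v ∈ S
  · have hSv := hS.eq_singleton_of_isUniversal hu hvS
    obtain ⟨l, hl, hall⟩ := (hS.semicomplete (by simp [hSv])).exists_hamiltonian_diPath
    exact ⟨{l}, hSv ▸ isSPartition_singleton_of_hamiltonian hl hall⟩
  · have hSv : ∀ s ∈ S, s ≠ v := fun s hs => ne_of_mem_of_not_mem hs hvS
    obtain ⟨P₀, hP₀⟩ := h _ (hS.preimage_val hSv)
    have hP := hP₀.map_val
    obtain ⟨s, hs⟩ := hS.nonempty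
    obtain ⟨l₀, ⟨hl₀, -⟩, -⟩ := hP.2.1 s (hSv s hs)
    obtain ⟨P, hP'⟩ := hP.exists_insert ⟨l₀, hl₀⟩ (fun h => h rfl) hvS hu
    exact ⟨P, hP'.isSPartition fun u => by by_cases huv : u = v <;> simp [huv]⟩

/-- If `v` is a universal vertex of `D` and `D - v` satisfies the α-property, then `D`
satisfies the α-property. -/
theorem universal_alphaProperty {V : Type*} [Finite V] (A : V → V → Prop)
    (hirr : ∀ v, ¬ A v v) (v : V) (hu : IsUniversal A v)
    (h : AlphaProperty (fun a b : {u : V // u ≠ v} => A a.1 b.1)) :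
    AlphaProperty A :=
  universal_alphaProperty_general A v hu h
end

section
/- If a digraph D can be partitioned into k ≥ 2 induced subdigraphs H_1, ..., H_k such that each H_i satisfies the α-property and α(D) = α(H_1) + ... + α(H_k), then D satisfies the α-property. -/
open Relation

variable {V : Type*}

/-!
A maximum stable set `S` of `D` meets each part `H_i` in a stable set of size at most `α(H_i)`;
since `|S| = α(D) = ∑ α(H_i)`, each `S ∩ V(H_i)` is a maximum stable set of `H_i`. The
α-property of the parts gives an `(S ∩ V(H_i))`-path partition of each `H_i`, and the union of
these is an `S`-path partition of `D`.
-/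

open Set

abbrev inducedRel (A : V → V → Prop) (W : Set V) : W → W → Prop := fun a b => A a.1 b.1

section Stable

variable {A : V → V → Prop}

theorem IsStable.ncard_le_alphaNum [Finite V] {T : Set V} (hT : IsStable A T) :
    T.ncard ≤ alphaNum A := by
  refine le_csSup ⟨Nat.card V, ?_⟩ ⟨T, hT, rfl⟩
  rintro n ⟨S, -, rfl⟩
  exact (ncard_le_ncard (subset_univ S)).trans_eq (ncard_univ V)

theorem IsMaxStable.ncard_eq_alphaNum [Finite V] {S : Set V} (hS : IsMaxStable A S) :
    S.ncard = alphaNum A := by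
  refine le_antisymm hS.1.ncard_le_alphaNum (csSup_le ⟨0, ∅, by simp [IsStable], by simp⟩ ?_)
  rintro n ⟨T, hT, rfl⟩
  exact hS.2 T hT

theorem IsStable.preimage_val {S : Set V} (hS : IsStable A S) (W : Set V) :
    IsStable (inducedRel A W) (Subtype.val ⁻¹' S) :=
  fun u hu v hv huv => hS u hu v hv (Subtype.val_injective.ne huv)

theorem ncard_preimage_val (W S : Set V) : (Subtype.val ⁻¹' S : Set W).ncard = (W ∩ S).ncard := by
  rw [← Subtype.image_preimage_val, ncard_image_of_injective _ Subtype.val_injective]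

theorem ncard_eq_sum_ncard_inter [Finite V] {ι : Type*} [Fintype ι] {W : ι → Set V}
    (hdisj : Pairwise fun i j => Disjoint (W i) (W j)) (hcover : (⋃ i, W i) = univ) (S : Set V) :
    S.ncard = ∑ i, (W i ∩ S).ncard := by
  have hS : S = ⋃ i, W i ∩ S := by rw [← iUnion_inter, hcover, univ_inter]
  conv_lhs => rw [hS]
  rw [ncard_iUnion_of_finite (fun _ => toFinite _)
    (fun i j hij => (hdisj hij).mono inter_subset_left inter_subset_left),
    finsum_eq_sum_of_fintype]

theorem IsMaxStable.preimage_val_of_alphaNum_eq_sum [Finite V] {ι : Type*} [Fintype ι]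
    {W : ι → Set V} (hdisj : Pairwise fun i j => Disjoint (W i) (W j))
    (hcover : (⋃ i, W i) = univ) (halpha : alphaNum A = ∑ i, alphaNum (inducedRel A (W i)))
    {S : Set V} (hS : IsMaxStable A S) (i : ι) :
    IsMaxStable (inducedRel A (W i)) (Subtype.val ⁻¹' S) := by
  have hle : ∀ j, (Subtype.val ⁻¹' S : Set (W j)).ncard ≤ alphaNum (inducedRel A (W j)) :=
    fun j => (hS.1.preimage_val (W j)).ncard_le_alphaNum
  have hsum : ∑ j, (Subtype.val ⁻¹' S : Set (W j)).ncard = ∑ j, alphaNum (inducedRel A (W j)) := by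
    simp only [ncard_preimage_val]
    rw [← ncard_eq_sum_ncard_inter hdisj hcover, hS.ncard_eq_alphaNum, halpha]
  have heq := (Finset.sum_eq_sum_iff_of_le fun j _ => hle j).mp hsum i (Finset.mem_univ i)
  exact ⟨hS.1.preimage_val (W i), fun T hT => hT.ncard_le_alphaNum.trans heq.ge⟩

end Stable

section PathPartition

variable {A : V → V → Prop} {ι : Type*} {W : ι → Set V}

theorem IsDiPath.map_val_s9 {U : Set V} {l : List U} (hl : IsDiPath (inducedRel A U) l) :
    IsDiPath A (l.map Subtype.val) :=
  ⟨fun h => hl.1 (List.map_eq_nil_iff.mp h), hl.2.1.map Subtype.val_injective,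
    List.isChain_map_of_isChain Subtype.val (fun _ _ h => h) hl.2.2⟩

theorem IsPathPartition.iUnion_map_val (hdisj : Pairwise fun i j => Disjoint (W i) (W j))
    (hcover : (⋃ i, W i) = univ) {P : ∀ i, Set (List (W i))}
    (hP : ∀ i, IsPathPartition (inducedRel A (W i)) (P i)) :
    IsPathPartition A (⋃ i, List.map Subtype.val '' P i) := by
  refine ⟨?_, fun v => ?_⟩
  · simp only [mem_iUnion, mem_image]
    rintro _ ⟨i, m, hm, rfl⟩
    exact ((hP i).1 m hm).map_val_s9
  obtain ⟨i, hvi⟩ := mem_iUnion.mp (hcover ▸ mem_univ v)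
  obtain ⟨m, ⟨hmP, hvm⟩, hmu⟩ := (hP i).2 ⟨v, hvi⟩
  refine ⟨m.map Subtype.val,
    ⟨mem_iUnion.mpr ⟨i, m, hmP, rfl⟩, List.mem_map.mpr ⟨_, hvm, rfl⟩⟩, ?_⟩
  rintro _ ⟨hl, hvl⟩
  obtain ⟨j, m', hm', rfl⟩ := mem_iUnion.mp hl
  obtain ⟨w, hwm', rfl⟩ := List.mem_map.mp hvl
  obtain rfl : j = i := by_contra fun hji => disjoint_left.mp (hdisj hji) w.2 hvi
  rw [hmu m' ⟨hm', hwm'⟩]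

theorem IsSPartition.iUnion_map_val (hdisj : Pairwise fun i j => Disjoint (W i) (W j))
    (hcover : (⋃ i, W i) = univ) {S : Set V} {P : ∀ i, Set (List (W i))}
    (hP : ∀ i, IsSPartition (inducedRel A (W i)) (Subtype.val ⁻¹' S) (P i)) :
    IsSPartition A S (⋃ i, List.map Subtype.val '' P i) := by
  refine ⟨IsPathPartition.iUnion_map_val hdisj hcover fun i => (hP i).1, ?_⟩
  simp only [mem_iUnion, mem_image]
  rintro _ ⟨i, m, hm, rfl⟩
  obtain ⟨s, ⟨hsm, hsS⟩, hsu⟩ := (hP i).2 m hm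
  refine ⟨s.1, ⟨List.mem_map.mpr ⟨s, hsm, rfl⟩, hsS⟩, ?_⟩
  rintro _ ⟨htl, htS⟩
  obtain ⟨w, hwm, rfl⟩ := List.mem_map.mp htl
  rw [hsu w ⟨hwm, htS⟩]

end PathPartition

theorem partition_alphaProperty_general {V : Type*} [Finite V] (A : V → V → Prop)
    (k : ℕ) (W : Fin k → Set V)
    (hdisj : Pairwise fun i j => Disjoint (W i) (W j))
    (hcover : (⋃ i, W i) = Set.univ)
    (hprop : ∀ i, AlphaProperty (fun a b : W i => A a.1 b.1))
    (halpha : alphaNum A = ∑ i, alphaNum (fun a b : W i => A a.1 b.1)) :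
    AlphaProperty A := by
  intro S hS
  choose P hP using fun i =>
    hprop i _ (hS.preimage_val_of_alphaNum_eq_sum hdisj hcover halpha i)
  exact ⟨_, IsSPartition.iUnion_map_val hdisj hcover hP⟩

/-- If `D` is partitioned into `k ≥ 2` induced subdigraphs each satisfying the
α-property, with `α(D)` equal to the sum of their stability numbers, then `D` satisfies
the α-property. -/
theorem partition_alphaProperty {V : Type*} [Finite V] (A : V → V → Prop)
    (hirr : ∀ v, ¬ A v v) (k : ℕ) (hk : 2 ≤ k) (W : Fin k → Set V)
    (hne : ∀ i, (W i).Nonempty)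
    (hdisj : Pairwise fun i j => Disjoint (W i) (W j))
    (hcover : (⋃ i, W i) = Set.univ)
    (hprop : ∀ i, AlphaProperty (fun a b : W i => A a.1 b.1))
    (halpha : alphaNum A = ∑ i, alphaNum (fun a b : W i => A a.1 b.1)) :
    AlphaProperty A :=
  partition_alphaProperty_general A k W hdisj hcover hprop halpha
end
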